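/- arXiv:2501.01814 — 6 statements merged into one kernel-verified Lean document; each statement's English description precedes it below -/
import Mathlib

section
/- If f = u + iv is a holomorphic function on the unit disk 𝔻 with values in the vertical strip (0,1) × ℝ (i.e. 0 < Re f(z) < 1 for all z ∈ 𝔻) and Im f(0) = 0, then ‖f‖₁ = sup_{0<r<1} (1/2π)∫₀^{2π} |f(re^{it})| dt < 1. -/
open Complex Metric MeasureTheory

/-- The integral mean `M₁(r, f) = (1/2π) ∫₀^{2π} |f(re^{it})| dt`. -/
noncomputable def circleMean (f : ℂ → ℂ) (r : ℝ) : ℝ :=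
  (1 / (2 * Real.pi)) * ∫ t in (0:ℝ)..(2 * Real.pi), ‖f (r * Complex.exp (t * Complex.I))‖

/-! On the strip `0 ≤ Re w ≤ 1` one has `‖w‖ ≤ (1 + ‖w‖²)/2 ≤ Re (1 - (1 - w)²/2)`, and
the right-hand side is the real part of a function holomorphic in `w`. Averaging over the circle of
radius `r` and using the mean value property bounds every integral mean of `|f|` by
`Re (1 - (1 - f 0)²/2) = 1 - (1 - Re f 0)²/2 < 1`, since `f 0` is real. -/

open Real

theorem circleMean_eq_circleAverage (f : ℂ → ℂ) (r : ℝ) :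
    circleMean f r = Real.circleAverage (fun z => ‖f z‖) 0 r := by
  simp [circleMean, circleAverage, circleMap]

theorem Complex.norm_le_re_one_sub_one_sub_sq_div_two {w : ℂ} (h0 : 0 ≤ w.re)
    (h1 : w.re ≤ 1) :
    ‖w‖ ≤ (1 - (1 - w) ^ 2 / 2).re := by
  have hre : (1 - (1 - w) ^ 2 / 2).re = 1 - ((1 - w.re) ^ 2 - w.im ^ 2) / 2 := by
    simp [sq, Complex.div_ofNat_re]
  have hnorm : 2 * ‖w‖ ≤ 1 + ‖w‖ ^ 2 := by nlinarith [sq_nonneg (‖w‖ - 1)]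
  rw [Complex.sq_norm, Complex.normSq_apply] at hnorm
  rw [hre]
  nlinarith

section CircleAverage

variable {c : ℂ} {R : ℝ} {g : ℂ → ℂ}

theorem DiffContOnCl.circleIntegrable_comp {E : Type*} [NormedAddCommGroup E] {h : ℂ → E}
    (hh : Continuous h) (hg : DiffContOnCl ℂ g (ball c |R|)) :
    CircleIntegrable (fun z => h (g z)) c R := by
  rcases eq_or_ne R 0 with rfl | hR
  · exact circleIntegrable_zero_radius
  refine (hh.comp_continuousOn (hg.continuousOn.mono ?_)).circleIntegrable'
  rw [closure_ball c (abs_ne_zero.mpr hR)]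
  exact sphere_subset_closedBall

theorem DiffContOnCl.circleAverage_re (hg : DiffContOnCl ℂ g (ball c |R|)) :
    Real.circleAverage (fun z => (g z).re) c R = (g c).re := by
  rw [← hg.circleAverage]
  exact reCLM.circleAverage_comp_comm (hg.circleIntegrable_comp (h := fun w => w) continuous_id)

theorem DiffContOnCl.circleAverage_norm_le (hg : DiffContOnCl ℂ g (ball c |R|))
    (hre : ∀ z ∈ sphere c |R|, (g z).re ∈ Set.Icc 0 1) :
    Real.circleAverage (fun z => ‖g z‖) c R ≤ (1 - (1 - g c) ^ 2 / 2).re := by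
  have hpg : DiffContOnCl ℂ (fun z => 1 - (1 - g z) ^ 2 / 2) (ball c |R|) :=
    (by fun_prop : Differentiable ℂ fun w : ℂ => 1 - (1 - w) ^ 2 / 2).comp_diffContOnCl hg
  refine (circleAverage_mono (hg.circleIntegrable_comp continuous_norm)
    (hpg.circleIntegrable_comp (h := re) continuous_re) fun z hz => ?_).trans_eq
      hpg.circleAverage_re
  exact norm_le_re_one_sub_one_sub_sq_div_two (hre z hz).1 (hre z hz).2

end CircleAverage

/-- **Holomorphic maps into the strip `(0,1) × ℝ` have `H¹` norm less than `1`.**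
If `f` is holomorphic on the unit disk with `0 < Re f < 1` and `Im f(0) = 0`, then
`‖f‖₁ = sup_{0<r<1} (1/2π)∫₀^{2π} |f(re^{it})| dt < 1`. -/
theorem hardy_norm_lt_one_of_maps_to_strip (f : ℂ → ℂ)
    (hf : DifferentiableOn ℂ f (ball (0:ℂ) 1))
    (hstrip : ∀ z ∈ ball (0:ℂ) 1, 0 < (f z).re ∧ (f z).re < 1)
    (h0 : (f 0).im = 0) :
    BddAbove (Set.range fun r : Set.Ioo (0:ℝ) 1 => circleMean f r) ∧
      (⨆ r : Set.Ioo (0:ℝ) 1, circleMean f r) < 1 := by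
  set u := (f 0).re
  have hu : u < 1 := (hstrip 0 (mem_ball_self one_pos)).2
  have hbound : ∀ r : Set.Ioo (0:ℝ) 1, circleMean f r ≤ 1 - (1 - u) ^ 2 / 2 := by
    rintro ⟨r, hr0, hr1⟩
    have hsub : closedBall (0:ℂ) |r| ⊆ ball 0 1 :=
      closedBall_subset_ball (by rwa [abs_of_pos hr0])
    have hre : ∀ z ∈ sphere (0:ℂ) |r|, (f z).re ∈ Set.Icc 0 1 := fun z hz =>
      have h := hstrip z (hsub (sphere_subset_closedBall hz))
      ⟨h.1.le, h.2.le⟩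
    have h := (hf.diffContOnCl_ball hsub).circleAverage_norm_le hre
    have hval : (1 - (1 - f 0) ^ 2 / 2).re = 1 - (1 - u) ^ 2 / 2 := by
      simp [sq, Complex.div_ofNat_re, h0, u]
    rwa [circleMean_eq_circleAverage, ← hval]
  refine ⟨⟨_, Set.forall_mem_range.2 hbound⟩, ?_⟩
  have : Nonempty (Set.Ioo (0:ℝ) 1) := ⟨⟨1 / 2, by norm_num⟩⟩
  calc (⨆ r : Set.Ioo (0:ℝ) 1, circleMean f r) ≤ 1 - (1 - u) ^ 2 / 2 := ciSup_le hbound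
    _ < 1 := by nlinarith
end

section
/- Let K ≥ 1, k = (K-1)/(K+1), and let f = u + iv = g + conj(h) be a harmonic K-quasiregular mapping on the unit disk 𝔻 (g, h holomorphic with |h'| ≤ k|g'| on 𝔻), and assume u = Re f > 0 on 𝔻. Then at every point of 𝔻, Δ|f| ≤ K²·Δ(u log u), where Δ denotes the Laplace operator. -/
/-!
Write `f = g + conj h` and `u = Re f = Re (g + h)`. Since `g + h` is holomorphic, `u` is harmonic and
`Δ (u log u) = |∇u|² / u = |g' + h'|² / u`. For `|f|` a direct computation gives
`Δ|f| = (|g'|² + |h'|²) / |f| - 2 Re (g' conj h' conj f²) / |f|³ ≤ (|g'| + |h'|)² / |f|`, and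
`|f| ≥ u`. Finally the dilatation bound `|h'| ≤ k |g'|` is equivalent to
`|g'| + |h'| ≤ K (|g'| - |h'|)`, and `|g'| - |h'| ≤ |g' + h'|`.
-/

open Complex Metric MeasureTheory

/-- The planar Laplacian `Δw = ∂²w/∂x² + ∂²w/∂y²` of a function `w : ℂ → ℝ`. -/
noncomputable def lap2 (w : ℂ → ℝ) (z : ℂ) : ℝ :=
  iteratedFDeriv ℝ 2 w z ![1, 1] + iteratedFDeriv ℝ 2 w z ![Complex.I, Complex.I]

open Filter Topology InnerProductSpace Laplacian ComplexConjugate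

theorem lap2_eq_laplacian (w : ℂ → ℝ) : lap2 w = Δ w :=
  (laplacian_eq_iteratedFDeriv_complexPlane w).symm

theorem ContinuousLinearMap.eq_smul_reCLM_add_smul_imCLM (L : ℂ →L[ℝ] ℝ) :
    L = L 1 • reCLM + L I • imCLM := by
  refine ContinuousLinearMap.coe_injective (basisOneI.ext fun i ↦ ?_)
  fin_cases i <;> simp

theorem laplacian_eq_of_partials {w p q : ℂ → ℝ} {z : ℂ} {P Q : ℂ →L[ℝ] ℝ}
    (hp : ∀ᶠ y in 𝓝 z, fderiv ℝ w y 1 = p y) (hq : ∀ᶠ y in 𝓝 z, fderiv ℝ w y I = q y)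
    (hP : HasFDerivAt p P z) (hQ : HasFDerivAt q Q z) :
    Δ w z = P 1 + Q I := by
  have hw : fderiv ℝ w =ᶠ[𝓝 z] fun y ↦ p y • reCLM + q y • imCLM := by
    filter_upwards [hp, hq] with y hpy hqy
    rw [(fderiv ℝ w y).eq_smul_reCLM_add_smul_imCLM, hpy, hqy]
  have hw' : fderiv ℝ (fderiv ℝ w) z = P.smulRight reCLM + Q.smulRight imCLM := by
    rw [hw.fderiv_eq]
    exact ((hP.smul_const reCLM).add (hQ.smul_const imCLM)).fderiv
  simp [laplacian_eq_iteratedFDeriv_complexPlane, iteratedFDeriv_two_apply, hw']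

theorem HasFDerivAt.norm_of_ne_zero {E F : Type*} [NormedAddCommGroup E] [NormedSpace ℝ E]
    [NormedAddCommGroup F] [InnerProductSpace ℝ F] {f : E → F} {f' : E →L[ℝ] F} {x : E}
    (hf : HasFDerivAt f f' x) (h0 : f x ≠ 0) :
    HasFDerivAt (‖f ·‖) (‖f x‖⁻¹ • (innerSL ℝ (f x)).comp f') x := by
  have h := hf.norm_sq.sqrt (by positivity)
  simp only [Real.sqrt_sq (norm_nonneg _)] at h
  convert h using 1
  ext v
  simp [field]

theorem hasFDerivAt_add_conj {g h : ℂ → ℂ} {c d y : ℂ} (hg : HasDerivAt g c y)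
    (hh : HasDerivAt h d y) :
    HasFDerivAt (fun w ↦ g w + conj (h w))
      (c • (1 : ℂ →L[ℝ] ℂ) + (conjCLE : ℂ →L[ℝ] ℂ).comp (d • (1 : ℂ →L[ℝ] ℂ))) y :=
  hg.complexToReal_fderiv.add (conjCLE.hasFDerivAt.comp y hh.complexToReal_fderiv)

theorem laplacian_comp_re {φ : ℂ → ℂ} {ψ ψ' : ℝ → ℝ} {ψ'' : ℝ} {z : ℂ} (hφ : AnalyticAt ℂ φ z)
    (hψ : ∀ᶠ x in 𝓝 (φ z).re, HasDerivAt ψ (ψ' x) x) (hψ' : HasDerivAt ψ' ψ'' (φ z).re) :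
    Δ (fun y ↦ ψ (φ y).re) z = ψ'' * ‖deriv φ z‖ ^ 2 := by
  have hRe : ∀ {y : ℂ}, AnalyticAt ℂ φ y →
      HasFDerivAt (fun y ↦ (φ y).re) (reCLM.comp (deriv φ y • (1 : ℂ →L[ℝ] ℂ))) y :=
    fun hy ↦ reCLM.hasFDerivAt.comp _ hy.differentiableAt.hasDerivAt.complexToReal_fderiv
  have hψ_near : ∀ᶠ y in 𝓝 z, AnalyticAt ℂ φ y ∧ HasDerivAt ψ (ψ' (φ y).re) (φ y).re :=
    hφ.eventually_analyticAt.and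
      ((continuous_re.continuousAt.comp hφ.continuousAt).tendsto.eventually hψ)
  have hφ' : HasFDerivAt (deriv φ) (deriv (deriv φ) z • (1 : ℂ →L[ℝ] ℂ)) z :=
    hφ.deriv.differentiableAt.hasDerivAt.complexToReal_fderiv
  have hP := (hψ'.comp_hasFDerivAt z (hRe hφ)).mul (reCLM.hasFDerivAt.comp z hφ')
  have hQ := (hψ'.comp_hasFDerivAt z (hRe hφ)).mul
    (reCLM.hasFDerivAt.comp z (hφ'.mul_const I))
  rw [laplacian_eq_of_partials (p := fun y ↦ ψ' (φ y).re * (deriv φ y).re)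
    (q := fun y ↦ ψ' (φ y).re * (deriv φ y * I).re) ?_ ?_ hP hQ]
  · simp only [Function.comp_apply, reCLM_apply, add_apply, smul_apply,
      ContinuousLinearMap.comp_apply, one_apply_eq_self, smul_eq_mul, mul_re, mul_im, one_re, one_im,
      I_re, I_im, Complex.sq_norm, normSq_apply]
    -- the `ψ'` terms are `ψ' (Re φ'' + Re (I² φ'')) = 0`: `Re φ` is harmonic
    ring
  all_goals
    filter_upwards [hψ_near] with y ⟨hy, hψy⟩
    have hw : HasFDerivAt (fun y ↦ ψ (φ y).re) _ y := hψy.comp_hasFDerivAt y (hRe hy)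
    rw [hw.fderiv]
    simp

theorem laplacian_mul_log_re {φ : ℂ → ℂ} {z : ℂ} (hφ : AnalyticAt ℂ φ z) (hre : 0 < (φ z).re) :
    Δ (fun y ↦ (φ y).re * Real.log (φ y).re) z = ‖deriv φ z‖ ^ 2 / (φ z).re := by
  rw [div_eq_inv_mul]
  exact laplacian_comp_re (ψ := fun x ↦ x * Real.log x) (ψ' := fun x ↦ Real.log x + 1) hφ
    ((eventually_ne_nhds hre.ne').mono fun x hx ↦ Real.hasDerivAt_mul_log hx)
    ((Real.hasDerivAt_log hre.ne').add_const 1)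

theorem laplacian_norm_add_conj {g h : ℂ → ℂ} {z : ℂ} (hg : AnalyticAt ℂ g z)
    (hh : AnalyticAt ℂ h z) (h0 : g z + conj (h z) ≠ 0) :
    Δ (fun y ↦ ‖g y + conj (h y)‖) z =
      (‖deriv g z‖ ^ 2 + ‖deriv h z‖ ^ 2) / ‖g z + conj (h z)‖ -
        2 * (deriv g z * conj (deriv h z) * conj (g z + conj (h z)) ^ 2).re /
          ‖g z + conj (h z)‖ ^ 3 := by
  set F := fun y ↦ g y + conj (h y) with hF_def
  have hF : ∀ {y}, AnalyticAt ℂ g y → AnalyticAt ℂ h y → HasFDerivAt F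
      (deriv g y • (1 : ℂ →L[ℝ] ℂ) + (conjCLE : ℂ →L[ℝ] ℂ).comp (deriv h y • 1)) y :=
    fun hgy hhy ↦ hasFDerivAt_add_conj hgy.differentiableAt.hasDerivAt
      hhy.differentiableAt.hasDerivAt
  have h_near : ∀ᶠ y in 𝓝 z, AnalyticAt ℂ g y ∧ AnalyticAt ℂ h y ∧ F y ≠ 0 :=
    hg.eventually_analyticAt.and <| hh.eventually_analyticAt.and <|
      (hF hg hh).continuousAt.eventually_ne h0
  have hg' := hg.deriv.differentiableAt.hasDerivAt
  have hh' := hh.deriv.differentiableAt.hasDerivAt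
  have hnorm_inv := (hasDerivAt_inv (norm_ne_zero_iff.mpr h0)).comp_hasFDerivAt z
    ((hF hg hh).norm_of_ne_zero h0)
  have hP := hnorm_inv.mul ((hF hg hh).inner ℝ (hasFDerivAt_add_conj hg' hh'))
  have hQ := hnorm_inv.mul
    ((hF hg hh).inner ℝ (hasFDerivAt_add_conj (hg'.mul_const I) (hh'.mul_const I)))
  rw [laplacian_eq_of_partials
    (p := fun y ↦ ‖F y‖⁻¹ * ⟪F y, deriv g y + conj (deriv h y)⟫_ℝ)
    (q := fun y ↦ ‖F y‖⁻¹ * ⟪F y, deriv g y * I + conj (deriv h y * I)⟫_ℝ) ?_ ?_ hP hQ]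
  · simp only [hF_def, Function.comp_apply]
    generalize g z + conj (h z) = w at h0 ⊢
    have hw : ‖w‖ ≠ 0 := norm_ne_zero_iff.mpr h0
    have hw2 : ‖w‖ ^ 2 = w.re ^ 2 + w.im ^ 2 := by rw [Complex.sq_norm, normSq_apply]; ring
    generalize ‖w‖ = m at hw hw2 ⊢
    rw [Complex.sq_norm, Complex.sq_norm]
    simp only [ContinuousLinearMap.comp_add, add_apply, smul_apply,
      ContinuousLinearMap.comp_apply, ContinuousLinearMap.prod_apply, one_apply_eq_self, smul_eq_mul,
      ContinuousLinearEquiv.coe_coe, conjCLE_apply, fderivInnerCLM_apply, coe_innerSL_apply,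
      Complex.inner, mul_re, mul_im, add_re, add_im, conj_re, conj_im, one_re, one_im, I_re,
      I_im, sq, normSq_apply]
    field_simp
    -- the `g''`, `h''` terms cancel as in `Δ (g + conj h) = 0`
    linear_combination ((deriv g z).re ^ 2 + (deriv g z).im ^ 2 + (deriv h z).re ^ 2 +
      (deriv h z).im ^ 2) * hw2
  all_goals
    filter_upwards [h_near] with y ⟨hgy, hhy, hFy⟩
    rw [((hF hgy hhy).norm_of_ne_zero hFy).fderiv]
    simp [-Complex.inner, inner_add_right, mul_add]

theorem laplacian_norm_add_conj_le {g h : ℂ → ℂ} {z : ℂ} (hg : AnalyticAt ℂ g z)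
    (hh : AnalyticAt ℂ h z) (h0 : g z + conj (h z) ≠ 0) :
    Δ (fun y ↦ ‖g y + conj (h y)‖) z ≤
      (‖deriv g z‖ + ‖deriv h z‖) ^ 2 / ‖g z + conj (h z)‖ := by
  rw [laplacian_norm_add_conj hg hh h0]
  set w := g z + conj (h z)
  have hw : 0 < ‖w‖ := norm_pos_iff.mpr h0
  have hre_bound : -(deriv g z * conj (deriv h z) * conj w ^ 2).re ≤
      ‖deriv g z‖ * ‖deriv h z‖ * ‖w‖ ^ 2 := by
    calc -(deriv g z * conj (deriv h z) * conj w ^ 2).re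
        ≤ ‖deriv g z * conj (deriv h z) * conj w ^ 2‖ := (neg_le_abs _).trans (abs_re_le_norm _)
      _ = ‖deriv g z‖ * ‖deriv h z‖ * ‖w‖ ^ 2 := by simp
  have hcross : -(2 * (deriv g z * conj (deriv h z) * conj w ^ 2).re / ‖w‖ ^ 3) ≤
      2 * ‖deriv g z‖ * ‖deriv h z‖ / ‖w‖ := by
    rw [← neg_div, div_le_div_iff₀ (by positivity) hw]
    nlinarith
  have hsplit : (‖deriv g z‖ + ‖deriv h z‖) ^ 2 / ‖w‖ =
      (‖deriv g z‖ ^ 2 + ‖deriv h z‖ ^ 2) / ‖w‖ + 2 * ‖deriv g z‖ * ‖deriv h z‖ / ‖w‖ := by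
    ring
  linarith

theorem sq_norm_add_norm_le_mul_sq_norm_add {E : Type*} [SeminormedAddCommGroup E] {K : ℝ}
    (hK : 0 ≤ K) {c d : E} (hcd : ‖d‖ ≤ (K - 1) / (K + 1) * ‖c‖) :
    (‖c‖ + ‖d‖) ^ 2 ≤ K ^ 2 * ‖c + d‖ ^ 2 := by
  have hdilat : ‖c‖ + ‖d‖ ≤ K * (‖c‖ - ‖d‖) := by
    rw [div_mul_eq_mul_div, le_div_iff₀ (by linarith)] at hcd
    linarith
  have htri : ‖c‖ - ‖d‖ ≤ ‖c + d‖ := by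
    simpa using norm_sub_norm_le c (-d)
  calc (‖c‖ + ‖d‖) ^ 2 ≤ (K * ‖c + d‖) ^ 2 := by
        gcongr
        exact hdilat.trans (mul_le_mul_of_nonneg_left htri hK)
    _ = K ^ 2 * ‖c + d‖ ^ 2 := by ring

/-- **Key lemma:** if `f = u + iv = g + conj h` is a harmonic `K`-quasiregular mapping
on the unit disk with `u = Re f > 0`, then `Δ|f| ≤ K² Δ(u log u)` on `𝔻`. -/
theorem laplacian_abs_le (K : ℝ) (hK : 1 ≤ K)
    (g h f : ℂ → ℂ) (u : ℂ → ℝ)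
    (hg : DifferentiableOn ℂ g (ball (0:ℂ) 1))
    (hh : DifferentiableOn ℂ h (ball (0:ℂ) 1))
    (hqr : ∀ z ∈ ball (0:ℂ) 1,
      ‖deriv h z‖ ≤ (K - 1) / (K + 1) * ‖deriv g z‖)
    (hf : ∀ z ∈ ball (0:ℂ) 1, f z = g z + (starRingEnd ℂ) (h z))
    (hu : ∀ z ∈ ball (0:ℂ) 1, u z = (f z).re)
    (hupos : ∀ z ∈ ball (0:ℂ) 1, 0 < u z) :
    ∀ z ∈ ball (0:ℂ) 1,
      lap2 (fun w => ‖f w‖) z ≤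
        K ^ 2 * lap2 (fun w => u w * Real.log (u w)) z := by
  intro z hz
  have hgz := hg.analyticOnNhd isOpen_ball z hz
  have hhz := hh.analyticOnNhd isOpen_ball z hz
  have hre : 0 < (g z + conj (h z)).re := by rw [← hf z hz, ← hu z hz]; exact hupos z hz
  have hf_eq : (fun w ↦ ‖f w‖) =ᶠ[𝓝 z] fun w ↦ ‖g w + conj (h w)‖ := by
    filter_upwards [isOpen_ball.mem_nhds hz] with w hw
    rw [hf w hw]
  have hu_eq : (fun w ↦ u w * Real.log (u w)) =ᶠ[𝓝 z]
      fun w ↦ (g w + h w).re * Real.log (g w + h w).re := by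
    filter_upwards [isOpen_ball.mem_nhds hz] with w hw
    simp [hu w hw, hf w hw]
  rw [lap2_eq_laplacian, lap2_eq_laplacian, (laplacian_congr_nhds hf_eq).eq_of_nhds,
    (laplacian_congr_nhds hu_eq).eq_of_nhds,
    laplacian_mul_log_re (hgz.fun_add hhz) (by simpa using hre),
    deriv_fun_add hgz.differentiableAt hhz.differentiableAt]
  calc Δ (fun w ↦ ‖g w + conj (h w)‖) z
      ≤ (‖deriv g z‖ + ‖deriv h z‖) ^ 2 / ‖g z + conj (h z)‖ :=
        laplacian_norm_add_conj_le hgz hhz (fun h0 ↦ by simp [h0] at hre)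
    _ ≤ (‖deriv g z‖ + ‖deriv h z‖) ^ 2 / (g z + conj (h z)).re :=
        div_le_div_of_nonneg_left (by positivity) hre (re_le_norm _)
    _ ≤ K ^ 2 * ‖deriv g z + deriv h z‖ ^ 2 / (g z + conj (h z)).re := by
        gcongr
        exact sq_norm_add_norm_le_mul_sq_norm_add (by linarith) (hqr z hz)
    _ = K ^ 2 * (‖deriv g z + deriv h z‖ ^ 2 / (g z + h z).re) := by
        rw [add_re, add_re, conj_re, mul_div_assoc]
end

section
/- Let g, h be holomorphic functions on the unit disk 𝔻 and let f = g + conj(h). At every point z ∈ 𝔻 where f(z) ≠ 0, the Laplacian of |f| satisfies Δ|f|(z) = |g'(z) − (f(z)/conj(f(z)))·h'(z)|² / |f(z)|. -/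
open Complex Metric MeasureTheory

open Filter Topology ContinuousLinearMap ComplexConjugate

/-!
Write `dbar φ = φ_x + i φ_y` (twice the Wirtinger derivative `∂φ/∂z̄`). A real function `u`
whose differential is `v ↦ Re (q v)` near `z` has `Δu = Re (dbar q)` at `z`. For `u = |f|`
with `f = g + conj h` one finds `q = (conj f · g' + f · h') / |f|`; the Leibniz rule for
`dbar`, together with `dbar g = dbar h' = 0`, `dbar (conj h) = 2 conj h'` and
`dbar |f| = conj q`, gives `Δ|f| = 2 (|g'|² + |h'|²) / |f| - |conj f · g' + f · h'|² / |f|³`,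
and the parallelogram law for `conj f · g'` and `f · h'` turns this into the claimed expression.
-/

noncomputable def dbar (φ : ℂ → ℂ) (z : ℂ) : ℂ :=
  fderiv ℝ φ z 1 + I * fderiv ℝ φ z I

section dbar

variable {φ ψ : ℂ → ℂ} {z : ℂ}

lemma dbar_add (hφ : DifferentiableAt ℝ φ z) (hψ : DifferentiableAt ℝ ψ z) :
    dbar (fun w => φ w + ψ w) z = dbar φ z + dbar ψ z := by
  simp only [dbar, fderiv_fun_add hφ hψ, add_apply]
  ring

lemma dbar_mul (hφ : DifferentiableAt ℝ φ z) (hψ : DifferentiableAt ℝ ψ z) :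
    dbar (fun w => φ w * ψ w) z = φ z * dbar ψ z + ψ z * dbar φ z := by
  simp only [dbar, fderiv_fun_mul hφ hψ, add_apply, smul_apply, smul_eq_mul]
  ring

lemma dbar_inv (hψ : DifferentiableAt ℝ ψ z) (hψ0 : ψ z ≠ 0) :
    dbar (fun w => (ψ w)⁻¹) z = -dbar ψ z / ψ z ^ 2 := by
  have hcomp : fderiv ℝ (fun w => (ψ w)⁻¹) z =
      (fderiv ℝ Inv.inv (ψ z)).comp (fderiv ℝ ψ z) :=
    fderiv_comp z (differentiableAt_inv hψ0) hψ
  simp only [dbar, hcomp, fderiv_inv' hψ0, comp_apply, neg_apply, mulLeftRight_apply]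
  field_simp
  ring

lemma dbar_div (hφ : DifferentiableAt ℝ φ z) (hψ : DifferentiableAt ℝ ψ z)
    (hψ0 : ψ z ≠ 0) :
    dbar (fun w => φ w / ψ w) z = (ψ z * dbar φ z - φ z * dbar ψ z) / ψ z ^ 2 := by
  simp only [div_eq_mul_inv]
  rw [dbar_mul (ψ := fun w => (ψ w)⁻¹) hφ (hψ.fun_inv hψ0), dbar_inv hψ hψ0]
  field_simp
  ring

lemma dbar_eq_zero_of_differentiableAt (hφ : DifferentiableAt ℂ φ z) : dbar φ z = 0 := by
  have hI : fderiv ℂ φ z I = I * fderiv ℂ φ z 1 := by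
    rw [← smul_eq_mul I, ← map_smul, smul_eq_mul, mul_one]
  simp only [dbar, hφ.fderiv_restrictScalars ℝ, coe_restrictScalars', hI]
  linear_combination fderiv ℂ φ z 1 * I_mul_I

lemma dbar_conj (hφ : DifferentiableAt ℂ φ z) :
    dbar (fun w => conj (φ w)) z = 2 * conj (deriv φ z) := by
  have hcomp : fderiv ℝ (fun w => conj (φ w)) z =
      conjCLE.toContinuousLinearMap.comp (fderiv ℝ φ z) :=
    (conjCLE.hasFDerivAt.comp z (hφ.restrictScalars ℝ).hasFDerivAt).fderiv
  have hI : fderiv ℂ φ z I = I * deriv φ z := by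
    rw [← fderiv_apply_one_eq_deriv, ← smul_eq_mul I, ← map_smul, smul_eq_mul, mul_one]
  simp only [dbar, hcomp, hφ.fderiv_restrictScalars ℝ, comp_apply, coe_restrictScalars', hI,
    ContinuousLinearEquiv.coe_coe, conjCLE_apply, fderiv_apply_one_eq_deriv, map_mul, conj_I]
  linear_combination -conj (deriv φ z) * I_mul_I

lemma dbar_ofReal {u : ℂ → ℝ} {q : ℂ} (hu : HasFDerivAt u (reCLM ∘L mul ℝ ℂ q) z) :
    dbar (fun w => (u w : ℂ)) z = conj q := by
  have hcomp : fderiv ℝ (fun w => (u w : ℂ)) z = ofRealCLM.comp (reCLM ∘L mul ℝ ℂ q) :=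
    (ofRealCLM.hasFDerivAt.comp z hu).fderiv
  apply Complex.ext <;> simp [dbar, hcomp]

end dbar

lemma Filter.EventuallyEq.lap2_eq {u v : ℂ → ℝ} {z : ℂ} (h : u =ᶠ[𝓝 z] v) :
    lap2 u z = lap2 v z := by
  simp only [lap2, (h.iteratedFDeriv ℝ 2).eq_of_nhds]

lemma lap2_eq_re_dbar {u : ℂ → ℝ} {q : ℂ → ℂ} {z : ℂ}
    (hu : ∀ᶠ w in 𝓝 z, HasFDerivAt u (reCLM ∘L mul ℝ ℂ (q w)) w)
    (hq : DifferentiableAt ℝ q z) :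
    lap2 u z = (dbar q z).re := by
  set B : ℂ →L[ℝ] ℂ →L[ℝ] ℝ := compL ℝ ℂ ℂ ℝ reCLM ∘L mul ℝ ℂ
  have hfderiv : fderiv ℝ u =ᶠ[𝓝 z] fun w => B (q w) := by
    filter_upwards [hu] with w hw using hw.fderiv
  have hsecond : fderiv ℝ (fderiv ℝ u) z = B ∘L fderiv ℝ q z := by
    rw [hfderiv.fderiv_eq]
    exact (B.hasFDerivAt.comp z hq.hasFDerivAt).fderiv
  simp [lap2, iteratedFDeriv_two_apply, hsecond, B, dbar]

theorem HasFDerivAt.norm {E F : Type*} [NormedAddCommGroup E] [NormedSpace ℝ E]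
    [NormedAddCommGroup F] [InnerProductSpace ℝ F] {f : E → F} {f' : E →L[ℝ] F} {x : E}
    (hf : HasFDerivAt f f' x) (h0 : f x ≠ 0) :
    HasFDerivAt (fun y => ‖f y‖) (‖f x‖⁻¹ • (innerSL ℝ (f x)).comp f') x := by
  have hsq := hf.norm_sq.sqrt (by positivity)
  simp only [Real.sqrt_sq (norm_nonneg _)] at hsq
  convert hsq using 1
  ext v
  simp
  field_simp

lemma hasFDerivAt_norm_add_conj {g h : ℂ → ℂ} {w : ℂ}
    (hg : DifferentiableAt ℂ g w) (hh : DifferentiableAt ℂ h w) (h0 : g w + conj (h w) ≠ 0) :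
    HasFDerivAt (fun w => ‖g w + conj (h w)‖) (reCLM ∘L mul ℝ ℂ
      ((conj (g w + conj (h w)) * deriv g w + (g w + conj (h w)) * deriv h w) /
        ‖g w + conj (h w)‖)) w := by
  have hf : HasFDerivAt (fun w => g w + conj (h w))
      ((fderiv ℂ g w).restrictScalars ℝ +
        conjCLE.toContinuousLinearMap ∘L (fderiv ℂ h w).restrictScalars ℝ) w :=
    (hg.hasFDerivAt.restrictScalars ℝ).add
      (conjCLE.hasFDerivAt.comp w (hh.hasFDerivAt.restrictScalars ℝ))
  refine (hf.norm h0).congr_fderiv ?_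
  ext v
  simp [Complex.inner, fderiv_eq_smul_deriv]
  ring

lemma norm_sub_div_conj_mul_sq (F a b : ℂ) (hF : F ≠ 0) :
    ‖a - F / conj F * b‖ ^ 2 =
      2 * (‖a‖ ^ 2 + ‖b‖ ^ 2) - ‖conj F * a + F * b‖ ^ 2 / ‖F‖ ^ 2 := by
  have hquot : ‖a - F / conj F * b‖ = ‖conj F * a - F * b‖ / ‖F‖ := by
    rw [← norm_conj F, ← norm_div]
    congr 1
    field_simp [(map_ne_zero _).mpr hF]
  have hpar := parallelogram_law_with_norm ℝ (conj F * a) (F * b)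
  simp only [norm_mul, norm_conj] at hpar
  rw [hquot]
  field_simp [norm_ne_zero_iff.mpr hF]
  linarith

lemma dbar_conj_add_conj_mul_deriv {g h : ℂ → ℂ} {z : ℂ}
    (hg : AnalyticAt ℂ g z) (hh : AnalyticAt ℂ h z) :
    dbar (fun w => conj (g w + conj (h w)) * deriv g w + (g w + conj (h w)) * deriv h w) z =
      2 * (‖deriv g z‖ ^ 2 + ‖deriv h z‖ ^ 2) := by
  have hg₁ := hg.differentiableAt
  have hh₁ := hh.differentiableAt
  have hg' := hg.deriv.differentiableAt
  have hh' := hh.deriv.differentiableAt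
  simp only [map_add, conj_conj]
  rw [dbar_add (by fun_prop) (by fun_prop), dbar_mul (by fun_prop) (by fun_prop),
    dbar_mul (by fun_prop) (by fun_prop), dbar_add (by fun_prop) (by fun_prop),
    dbar_add (by fun_prop) (by fun_prop),
    dbar_conj hg₁, dbar_conj hh₁, dbar_eq_zero_of_differentiableAt hg₁,
    dbar_eq_zero_of_differentiableAt hh₁, dbar_eq_zero_of_differentiableAt hg',
    dbar_eq_zero_of_differentiableAt hh', ← mul_conj', ← mul_conj']
  ring

theorem lap2_norm_add_conj {f g h : ℂ → ℂ} {z : ℂ}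
    (hg : AnalyticAt ℂ g z) (hh : AnalyticAt ℂ h z)
    (hf : f =ᶠ[𝓝 z] fun w => g w + conj (h w)) (hz : f z ≠ 0) :
    lap2 (fun w => ‖f w‖) z =
      ‖deriv g z - f z / conj (f z) * deriv h z‖ ^ 2 / ‖f z‖ := by
  have hnorm : (fun w => ‖f w‖) =ᶠ[𝓝 z] fun w => ‖g w + conj (h w)‖ := hf.fun_comp norm
  rw [hnorm.lap2_eq, hf.eq_of_nhds]
  rw [hf.eq_of_nhds] at hz
  set F : ℂ → ℂ := fun w => g w + conj (h w)
  set N : ℂ → ℂ := fun w => conj (F w) * deriv g w + F w * deriv h w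
  have hgrad : ∀ᶠ w in 𝓝 z,
      HasFDerivAt (‖F ·‖) (reCLM ∘L mul ℝ ℂ (N w / ‖F w‖)) w := by
    filter_upwards [hg.eventually_analyticAt, hh.eventually_analyticAt,
      (hg.differentiableAt.continuousAt.add
        hh.differentiableAt.continuousAt.star).eventually_ne hz] with w hgw hhw hFw
    exact hasFDerivAt_norm_add_conj hgw.differentiableAt hhw.differentiableAt hFw
  have hg₁ := hg.differentiableAt
  have hh₁ := hh.differentiableAt
  have hg' := hg.deriv.differentiableAt
  have hh' := hh.deriv.differentiableAt
  have hN : DifferentiableAt ℝ N z := by fun_prop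
  have hnormF : DifferentiableAt ℝ (fun w => (‖F w‖ : ℂ)) z :=
    ofRealCLM.differentiableAt.comp z hgrad.self_of_nhds.differentiableAt
  have hnormF0 : (‖F z‖ : ℂ) ≠ 0 := by simpa using hz
  have hq : DifferentiableAt ℝ (fun w => N w / ‖F w‖) z := by
    simpa only [div_eq_mul_inv] using hN.fun_mul (hnormF.fun_inv hnormF0)
  rw [lap2_eq_re_dbar hgrad hq, dbar_div hN hnormF hnormF0,
    dbar_ofReal hgrad.self_of_nhds, dbar_conj_add_conj_mul_deriv hg hh,
    norm_sub_div_conj_mul_sq _ _ _ hz]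
  have hNN : N z * conj (N z / ‖F z‖) = ((‖N z‖ ^ 2 / ‖F z‖ : ℝ) : ℂ) := by
    rw [map_div₀, conj_ofReal, ← mul_div_assoc, mul_conj']
    push_cast
    rfl
  rw [hNN]
  dsimp only [N, F]
  norm_cast
  field_simp

/-- For a harmonic mapping `f = g + conj h` with `g, h` holomorphic on the unit disk,
at every point where `f ≠ 0` one has
`Δ|f| = |g' − (f / conj f) h'|² / |f|`. -/
theorem laplacian_abs_formula (g h f : ℂ → ℂ)
    (hg : DifferentiableOn ℂ g (ball (0:ℂ) 1))
    (hh : DifferentiableOn ℂ h (ball (0:ℂ) 1))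
    (hf : ∀ z ∈ ball (0:ℂ) 1, f z = g z + (starRingEnd ℂ) (h z)) :
    ∀ z ∈ ball (0:ℂ) 1, f z ≠ 0 →
      lap2 (fun w => ‖f w‖) z =
        (‖deriv g z - f z / (starRingEnd ℂ) (f z) * deriv h z‖) ^ 2 /
          ‖f z‖ := by
  intro z hz hz0
  have hball : ball (0:ℂ) 1 ∈ 𝓝 z := isOpen_ball.mem_nhds hz
  exact lap2_norm_add_conj (hg.analyticAt hball) (hh.analyticAt hball)
    (eventually_of_mem hball hf) hz0
end

section
/- Let n ≥ 2, K ≥ 1, and let f = (f₁, …, f_n) : 𝔹 → ℝⁿ be a harmonic K-quasiregular mapping on the unit ball 𝔹 ⊂ ℝⁿ with u := f₁ > 0 on 𝔹. Then at every point x ∈ 𝔹, Δ|f|(x) ≤ K²(n−1)·Δ(u log u)(x) = K²(n−1)·|∇u(x)|²/u(x). -/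
open Metric MeasureTheory

/-- The Laplacian of a map `f : ℝⁿ → F`, computed in the standard orthonormal basis. -/
noncomputable def lapE {n : ℕ} {F : Type*} [NormedAddCommGroup F] [NormedSpace ℝ F]
    (f : EuclideanSpace ℝ (Fin n) → F) (x : EuclideanSpace ℝ (Fin n)) : F :=
  ∑ i : Fin n, iteratedFDeriv ℝ 2 f x ![EuclideanSpace.single i 1, EuclideanSpace.single i 1]

section Auxiliary

open ContinuousLinearMap
open scoped RealInnerProductSpace

theorem second_apply' {n : ℕ} {F : Type*} [NormedAddCommGroup F] [NormedSpace ℝ F]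
    {g : EuclideanSpace ℝ (Fin n) → F} {x : EuclideanSpace ℝ (Fin n)}
    (hg : DifferentiableAt ℝ (fderiv ℝ g) x) (v : EuclideanSpace ℝ (Fin n)) :
    iteratedFDeriv ℝ 2 g x ![v, v] = fderiv ℝ (fun y => fderiv ℝ g y v) x v := by
  rw [iteratedFDeriv_two_apply, fderiv_clm_apply hg (differentiableAt_const v)]
  simp

theorem second_eq_of_eventually {n : ℕ} {F : Type*} [NormedAddCommGroup F] [NormedSpace ℝ F]
    {g e : EuclideanSpace ℝ (Fin n) → F} {x v : EuclideanSpace ℝ (Fin n)}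
    {p : EuclideanSpace ℝ (Fin n) →L[ℝ] F}
    (hg : DifferentiableAt ℝ (fderiv ℝ g) x)
    (hev : ∀ᶠ y in nhds x, fderiv ℝ g y v = e y)
    (he : HasFDerivAt e p x) :
    iteratedFDeriv ℝ 2 g x ![v, v] = p v := by
  rw [second_apply' hg v]
  have h2 : (fun y => fderiv ℝ g y v) =ᶠ[nhds x] e := hev
  rw [h2.fderiv_eq, he.fderiv]

theorem parseval_sq {F : Type*} [NormedAddCommGroup F] [InnerProductSpace ℝ F]
    {ι : Type*} [Fintype ι] (b : OrthonormalBasis ι ℝ F) (y : F) :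
    ∑ i, (⟪y, b i⟫ : ℝ) ^ 2 = ‖y‖ ^ 2 := by
  have h := b.sum_inner_mul_inner y y
  rw [real_inner_self_eq_norm_sq] at h
  rw [← h]
  exact Finset.sum_congr rfl fun i _ => by rw [real_inner_comm (b i) y, sq]

theorem adjoint_norm_lower {F : Type*} [NormedAddCommGroup F] [InnerProductSpace ℝ F]
    [FiniteDimensional ℝ F] [CompleteSpace F] (A : F →L[ℝ] F) {K : ℝ} (hK : 0 ≤ K)
    (hqr : ∀ h : F, ‖h‖ = 1 → ‖A‖ ≤ K * ‖A h‖) {v : F} (hv : ‖v‖ = 1) :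
    ‖A‖ ≤ K * ‖ContinuousLinearMap.adjoint A v‖ := by
  by_cases hA : A = 0
  · simp [hA]
  · have hinj : Function.Injective A := by
      rw [injective_iff_map_eq_zero]
      intro w hw
      by_contra hw0
      have hwn : 0 < ‖w‖ := norm_pos_iff.mpr hw0
      have h1 := hqr (‖w‖⁻¹ • w) (by rw [norm_smul, norm_inv, norm_norm]; exact inv_mul_cancel₀ hwn.ne')
      rw [A.map_smul, hw, smul_zero, norm_zero, mul_zero] at h1
      exact hA (norm_le_zero_iff.mp h1)
    have hsurj : Function.Surjective A :=
      (LinearMap.injective_iff_surjective (f := (A : F →ₗ[ℝ] F))).mp hinj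
    obtain ⟨w, hw⟩ := hsurj v
    have hw0 : w ≠ 0 := by
      rintro rfl
      rw [map_zero] at hw
      rw [← hw, norm_zero] at hv
      exact one_ne_zero hv.symm
    have hwn : 0 < ‖w‖ := norm_pos_iff.mpr hw0
    have h1 : ‖A‖ ≤ K * ‖w‖⁻¹ := by
      have := hqr (‖w‖⁻¹ • w) (by rw [norm_smul, norm_inv, norm_norm]; exact inv_mul_cancel₀ hwn.ne')
      rwa [A.map_smul, hw, norm_smul, norm_inv, Real.norm_eq_abs, abs_of_pos hwn, hv, mul_one]
        at this
    have h2 : (1 : ℝ) ≤ ‖ContinuousLinearMap.adjoint A v‖ * ‖w‖ := by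
      calc (1:ℝ) = ⟪ContinuousLinearMap.adjoint A v, w⟫ := by
            rw [ContinuousLinearMap.adjoint_inner_left, hw, real_inner_self_eq_norm_sq, hv]
            norm_num
        _ ≤ ‖ContinuousLinearMap.adjoint A v‖ * ‖w‖ := real_inner_le_norm _ _
    have h3 : ‖w‖⁻¹ ≤ ‖ContinuousLinearMap.adjoint A v‖ := by
      rw [inv_le_iff_one_le_mul₀ hwn]
      linarith [h2]
    calc ‖A‖ ≤ K * ‖w‖⁻¹ := h1
      _ ≤ K * ‖ContinuousLinearMap.adjoint A v‖ := mul_le_mul_of_nonneg_left h3 hK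

theorem sum_sq_columns {n : ℕ} (A : EuclideanSpace ℝ (Fin n) →L[ℝ] EuclideanSpace ℝ (Fin n))
    (b : OrthonormalBasis (Fin n) ℝ (EuclideanSpace ℝ (Fin n))) :
    ∑ i : Fin n, ‖A (EuclideanSpace.single i 1)‖ ^ 2
      = ∑ j : Fin n, ‖ContinuousLinearMap.adjoint A (b j)‖ ^ 2 := by
  calc ∑ i : Fin n, ‖A (EuclideanSpace.single i 1)‖ ^ 2
      = ∑ i : Fin n, ∑ j : Fin n, (⟪A (EuclideanSpace.single i 1), b j⟫ : ℝ) ^ 2 := by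
        exact Finset.sum_congr rfl fun i _ => (parseval_sq b _).symm
    _ = ∑ j : Fin n, ∑ i : Fin n, (⟪ContinuousLinearMap.adjoint A (b j),
          EuclideanSpace.single i 1⟫ : ℝ) ^ 2 := by
        rw [Finset.sum_comm]
        refine Finset.sum_congr rfl fun i _ => Finset.sum_congr rfl fun j _ => ?_
        rw [ContinuousLinearMap.adjoint_inner_left, real_inner_comm]
    _ = ∑ j : Fin n, ‖ContinuousLinearMap.adjoint A (b j)‖ ^ 2 := by
        refine Finset.sum_congr rfl fun j _ => ?_
        have := parseval_sq (EuclideanSpace.basisFun (Fin n) ℝ)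
          (ContinuousLinearMap.adjoint A (b j))
        simpa using this

end Auxiliary

set_option maxHeartbeats 1000000 in
open ContinuousLinearMap in
open scoped RealInnerProductSpace in
/-- **Key lemma in the ball:** if `f : 𝔹 → ℝⁿ` is harmonic and `K`-quasiregular with
`u := f₁ > 0`, then `Δ|f| ≤ K²(n−1) Δ(u log u) = K²(n−1) |∇u|²/u` on `𝔹`. -/
theorem laplacian_norm_le_ball (n : ℕ) (hn : 2 ≤ n) (K : ℝ) (hK : 1 ≤ K)
    (f : EuclideanSpace ℝ (Fin n) → EuclideanSpace ℝ (Fin n))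
    (u : EuclideanSpace ℝ (Fin n) → ℝ)
    (hu : ∀ x, u x = f x ⟨0, Nat.lt_of_lt_of_le Nat.zero_lt_two hn⟩)
    (hsmooth : ContDiffOn ℝ (⊤ : ℕ∞) f (ball 0 1))
    (hharm : ∀ x ∈ ball (0 : EuclideanSpace ℝ (Fin n)) 1, lapE f x = 0)
    (hqr : ∀ x ∈ ball (0 : EuclideanSpace ℝ (Fin n)) 1,
      ∀ h : EuclideanSpace ℝ (Fin n), ‖h‖ = 1 → ‖fderiv ℝ f x‖ ≤ K * ‖fderiv ℝ f x h‖)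
    (hupos : ∀ x ∈ ball (0 : EuclideanSpace ℝ (Fin n)) 1, 0 < u x) :
    ∀ x ∈ ball (0 : EuclideanSpace ℝ (Fin n)) 1,
      lapE (fun y => ‖f y‖) x ≤
          K ^ 2 * (n - 1) * lapE (fun y => u y * Real.log (u y)) x ∧
        lapE (fun y => u y * Real.log (u y)) x = ‖gradient u x‖ ^ 2 / u x := by
  classical
  intro x hx
  set i₀ : Fin n := ⟨0, Nat.lt_of_lt_of_le Nat.zero_lt_two hn⟩ with hi₀
  set pr : EuclideanSpace ℝ (Fin n) →L[ℝ] ℝ := EuclideanSpace.proj i₀ with hpr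
  have hopen : IsOpen (ball (0 : EuclideanSpace ℝ (Fin n)) 1) := isOpen_ball
  have hmem : ball (0 : EuclideanSpace ℝ (Fin n)) 1 ∈ nhds x := hopen.mem_nhds hx
  have hufun : u = fun y => pr (f y) := funext fun y => hu y
  have hfC : ∀ y ∈ ball (0 : EuclideanSpace ℝ (Fin n)) 1, ContDiffAt ℝ (⊤ : ℕ∞) f y :=
    fun y hy => hsmooth.contDiffAt (hopen.mem_nhds hy)
  have hfd : ∀ y ∈ ball (0 : EuclideanSpace ℝ (Fin n)) 1, DifferentiableAt ℝ f y :=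
    fun y hy => (hfC y hy).differentiableAt (by simp)
  have hf'C : ContDiffAt ℝ 1 (fderiv ℝ f) x := (hfC x hx).fderiv_right (WithTop.coe_le_coe.mpr le_top)
  have hf'd : DifferentiableAt ℝ (fderiv ℝ f) x := hf'C.differentiableAt one_ne_zero
  set A : EuclideanSpace ℝ (Fin n) →L[ℝ] EuclideanSpace ℝ (Fin n) := fderiv ℝ f x with hA
  -- second derivative of `f` in a fixed direction
  have hQ : ∀ v : EuclideanSpace ℝ (Fin n), HasFDerivAt (fun y => fderiv ℝ f y v)
      ((fderiv ℝ f x).comp (0 : EuclideanSpace ℝ (Fin n) →L[ℝ] EuclideanSpace ℝ (Fin n)) + (fderiv ℝ (fderiv ℝ f) x).flip v) x :=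
    fun v => hf'd.hasFDerivAt.clm_apply (hasFDerivAt_const v x)
  have hQapp : ∀ v : EuclideanSpace ℝ (Fin n), ((fderiv ℝ f x).comp (0 : EuclideanSpace ℝ (Fin n) →L[ℝ] EuclideanSpace ℝ (Fin n))
        + (fderiv ℝ (fderiv ℝ f) x).flip v) v = iteratedFDeriv ℝ 2 f x ![v, v] := by
    intro v
    rw [iteratedFDeriv_two_apply]
    simp
  -- positivity facts
  have hux : 0 < u x := hupos x hx
  have hfy0 : ∀ y ∈ ball (0 : EuclideanSpace ℝ (Fin n)) 1, f y ≠ 0 := by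
    intro y hy h
    have := hupos y hy
    rw [hu y, h] at this
    simp at this
  have hule : u x ≤ ‖f x‖ := by
    calc u x = ⟪f x, EuclideanSpace.single i₀ 1⟫ := by
          rw [hu x, EuclideanSpace.inner_single_right]
          simp [hi₀]
      _ ≤ ‖f x‖ * ‖EuclideanSpace.single i₀ (1:ℝ)‖ := real_inner_le_norm _ _
      _ = ‖f x‖ := by rw [EuclideanSpace.norm_single]; simp
  have hN : 0 < ‖f x‖ := lt_of_lt_of_le hux hule
  -- derivative of u on the ball
  have hud' : ∀ y ∈ ball (0 : EuclideanSpace ℝ (Fin n)) 1, HasFDerivAt u (pr.comp (fderiv ℝ f y)) y := by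
    intro y hy
    rw [hufun]
    exact pr.hasFDerivAt.comp y (hfd y hy).hasFDerivAt
  have hDu : fderiv ℝ u x = pr.comp A := (hud' x hx).fderiv
  -- gradient of u
  have hgrad : ∀ w : EuclideanSpace ℝ (Fin n), (⟪gradient u x, w⟫ : ℝ) = pr (A w) := by
    intro w
    have h0 : gradient u x = (InnerProductSpace.toDual ℝ (EuclideanSpace ℝ (Fin n))).symm (fderiv ℝ u x) := rfl
    rw [h0, InnerProductSpace.toDual_symm_apply, hDu]
    rfl
  have hgradadj : gradient u x = ContinuousLinearMap.adjoint A (EuclideanSpace.single i₀ 1) := by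
    refine ext_inner_right ℝ fun w => ?_
    rw [hgrad w, ContinuousLinearMap.adjoint_inner_left, EuclideanSpace.inner_single_left]
    simp [hpr]
  have hgradnorm : ‖gradient u x‖ ^ 2 = ∑ i : Fin n, (pr (A (EuclideanSpace.single i 1))) ^ 2 := by
    rw [← parseval_sq (EuclideanSpace.basisFun (Fin n) ℝ) (gradient u x)]
    exact Finset.sum_congr rfl fun i _ => by rw [EuclideanSpace.basisFun_apply, hgrad]
  -- second derivative of u * log u
  have hw2 : ∀ v : EuclideanSpace ℝ (Fin n), iteratedFDeriv ℝ 2 (fun y => u y * Real.log (u y)) x ![v, v]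
      = (pr (A v)) ^ 2 * (u x)⁻¹
        + (Real.log (u x) + 1) * pr (iteratedFDeriv ℝ 2 f x ![v, v]) := by
    intro v
    have hg2 : DifferentiableAt ℝ (fderiv ℝ (fun y => u y * Real.log (u y))) x := by
      have huC : ContDiffAt ℝ (⊤ : ℕ∞) u x := by
        rw [hufun]
        exact pr.contDiff.contDiffAt.comp x (hfC x hx)
      have hlogC : ContDiffAt ℝ (⊤ : ℕ∞) (fun y => Real.log (u y)) x :=
        (Real.contDiffAt_log.mpr (ne_of_gt hux)).comp x huC
      have hmulC : ContDiffAt ℝ (⊤ : ℕ∞) (fun y => u y * Real.log (u y)) x := huC.mul hlogC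
      exact (hmulC.fderiv_right (WithTop.coe_le_coe.mpr le_top)).differentiableAt one_ne_zero
    have hev : ∀ᶠ y in nhds x, fderiv ℝ (fun z => u z * Real.log (u z)) y v
        = (Real.log (u y) + 1) * pr (fderiv ℝ f y v) := by
      filter_upwards [hmem] with y hy
      have h2 : HasDerivAt (fun t : ℝ => t * Real.log t) (Real.log (u y) + 1) (u y) := by
        have h : HasDerivAt (fun t : ℝ => t * Real.log t) (1 * Real.log (u y) + u y * (u y)⁻¹) (u y) :=
          (hasDerivAt_id (u y)).mul (Real.hasDerivAt_log (ne_of_gt (hupos y hy)))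
        convert h using 1
        rw [one_mul, mul_inv_cancel₀ (ne_of_gt (hupos y hy))]
      have h3 : HasFDerivAt (fun z => u z * Real.log (u z))
          ((Real.log (u y) + 1) • (pr.comp (fderiv ℝ f y))) y :=
        h2.comp_hasFDerivAt y (hud' y hy)
      rw [h3.fderiv]
      simp
    have hc : HasFDerivAt (fun y => Real.log (u y) + 1) ((u x)⁻¹ • (pr.comp (fderiv ℝ f x))) x :=
      ((Real.hasDerivAt_log (ne_of_gt hux)).comp_hasFDerivAt x (hud' x hx)).add_const 1
    have hd : HasFDerivAt (fun y => pr (fderiv ℝ f y v))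
        (pr.comp ((fderiv ℝ f x).comp (0 : EuclideanSpace ℝ (Fin n) →L[ℝ] EuclideanSpace ℝ (Fin n)) + (fderiv ℝ (fderiv ℝ f) x).flip v)) x :=
      pr.hasFDerivAt.comp x (hQ v)
    have hres := second_eq_of_eventually hg2 hev (hc.mul hd)
    rw [hres]
    rw [ContinuousLinearMap.add_apply, ContinuousLinearMap.smul_apply,
      ContinuousLinearMap.smul_apply, ContinuousLinearMap.comp_apply, hQapp v]
    simp only [ContinuousLinearMap.smul_apply, ContinuousLinearMap.comp_apply, smul_eq_mul]
    ring
  -- second derivative of ‖f‖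
  have hw1 : ∀ v : EuclideanSpace ℝ (Fin n), iteratedFDeriv ℝ 2 (fun y => ‖f y‖) x ![v, v]
      = (‖A v‖ ^ 2 + ⟪f x, iteratedFDeriv ℝ 2 f x ![v, v]⟫) / ‖f x‖
        - ⟪f x, A v⟫ ^ 2 / ‖f x‖ ^ 3 := by
    intro v
    have hsq : ∀ y : EuclideanSpace ℝ (Fin n), Real.sqrt ⟪f y, f y⟫ = ‖f y‖ := by
      intro y
      rw [real_inner_self_eq_norm_mul_norm, Real.sqrt_mul_self (norm_nonneg _)]
    have hnormal : ∀ y ∈ ball (0 : EuclideanSpace ℝ (Fin n)) 1, HasFDerivAt (fun z => ‖f z‖)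
        ((1 / (2 * Real.sqrt ⟪f y, f y⟫)) • ((fderivInnerCLM ℝ (f y, f y)).comp
          ((fderiv ℝ f y).prod (fderiv ℝ f y)))) y := by
      intro y hy
      have hfy := (hfd y hy).hasFDerivAt
      have hq := hfy.inner ℝ hfy
      have hqpos : (0:ℝ) < ⟪f y, f y⟫ := by
        rw [real_inner_self_eq_norm_sq]
        exact pow_pos (norm_pos_iff.mpr (hfy0 y hy)) 2
      have hs := hq.sqrt (ne_of_gt hqpos)
      have hfun : (fun z => ‖f z‖) = fun z => Real.sqrt ⟪f z, f z⟫ := funext fun z => (hsq z).symm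
      rw [hfun]
      exact hs
    have hev : ∀ᶠ y in nhds x, fderiv ℝ (fun z => ‖f z‖) y v
        = ⟪f y, fderiv ℝ f y v⟫ * (‖f y‖)⁻¹ := by
      filter_upwards [hmem] with y hy
      rw [(hnormal y hy).fderiv]
      have hny : (0:ℝ) < ‖f y‖ := norm_pos_iff.mpr (hfy0 y hy)
      simp only [ContinuousLinearMap.smul_apply, ContinuousLinearMap.comp_apply,
        ContinuousLinearMap.prod_apply, fderivInnerCLM_apply, smul_eq_mul, hsq y]
      rw [real_inner_comm (fderiv ℝ f y v) (f y)]
      field_simp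
      ring
    have hg1 : DifferentiableAt ℝ (fderiv ℝ (fun y => ‖f y‖)) x := by
      have hnC : ContDiffAt ℝ (⊤ : ℕ∞) (fun y => ‖f y‖) x := (hfC x hx).norm ℝ (hfy0 x hx)
      exact (hnC.fderiv_right (WithTop.coe_le_coe.mpr le_top)).differentiableAt one_ne_zero
    set Dv : EuclideanSpace ℝ (Fin n) →L[ℝ] EuclideanSpace ℝ (Fin n) :=
      (fderiv ℝ f x).comp (0 : EuclideanSpace ℝ (Fin n) →L[ℝ] EuclideanSpace ℝ (Fin n))
        + (fderiv ℝ (fderiv ℝ f) x).flip v with hDv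
    have hI : HasFDerivAt (fun z => (⟪f z, fderiv ℝ f z v⟫ : ℝ))
        ((fderivInnerCLM ℝ (f x, fderiv ℝ f x v)).comp ((fderiv ℝ f x).prod Dv)) x :=
      (hfd x hx).hasFDerivAt.inner ℝ (hQ v)
    have hJ : HasFDerivAt (fun z => (‖f z‖)⁻¹)
        ((-(‖f x‖ ^ 2)⁻¹) • ((1 / (2 * Real.sqrt ⟪f x, f x⟫)) • ((fderivInnerCLM ℝ (f x, f x)).comp
          ((fderiv ℝ f x).prod (fderiv ℝ f x))))) x :=
      (hasDerivAt_inv (ne_of_gt hN)).comp_hasFDerivAt x (hnormal x hx)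
    have hres := second_eq_of_eventually hg1 hev (hI.mul hJ)
    have hIv : ((fderivInnerCLM ℝ (f x, fderiv ℝ f x v)).comp ((fderiv ℝ f x).prod Dv)) v
        = ⟪f x, iteratedFDeriv ℝ 2 f x ![v, v]⟫ + ‖A v‖ ^ 2 := by
      rw [ContinuousLinearMap.comp_apply, ContinuousLinearMap.prod_apply, fderivInnerCLM_apply,
        hDv, hQapp v]
      try rw [real_inner_self_eq_norm_sq]
    have hJv : ((fderivInnerCLM ℝ (f x, f x)).comp ((fderiv ℝ f x).prod (fderiv ℝ f x))) v
        = ⟪f x, A v⟫ + ⟪A v, f x⟫ := by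
      rw [ContinuousLinearMap.comp_apply, ContinuousLinearMap.prod_apply, fderivInnerCLM_apply]
    rw [hres]
    simp only [ContinuousLinearMap.add_apply, ContinuousLinearMap.smul_apply, smul_eq_mul]
    rw [hIv, hJv, hsq x, real_inner_comm (A v) (f x)]
    have hNne : ‖f x‖ ≠ 0 := ne_of_gt hN
    field_simp
    ring
  -- the equality part
  have hEq : lapE (fun y => u y * Real.log (u y)) x = ‖gradient u x‖ ^ 2 / u x := by
    have hsum : lapE (fun y => u y * Real.log (u y)) x
        = (∑ i : Fin n, (pr (A (EuclideanSpace.single i 1))) ^ 2) * (u x)⁻¹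
          + (Real.log (u x) + 1) * pr (lapE f x) := by
      rw [lapE, lapE, map_sum, Finset.sum_mul, Finset.mul_sum, ← Finset.sum_add_distrib]
      exact Finset.sum_congr rfl fun i _ => hw2 _
    rw [hsum, hharm x hx, map_zero, mul_zero, add_zero, hgradnorm, div_eq_mul_inv]
  refine ⟨?_, hEq⟩
  -- the inequality part
  have he₀n : ‖EuclideanSpace.single i₀ (1:ℝ)‖ = 1 := by
    rw [EuclideanSpace.norm_single]; norm_num
  have hKA : ‖A‖ ≤ K * ‖ContinuousLinearMap.adjoint A (EuclideanSpace.single i₀ (1:ℝ))‖ :=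
    adjoint_norm_lower A (le_trans zero_le_one hK) (hqr x hx) he₀n
  have hKA' : ‖A‖ ≤ K * ‖gradient u x‖ := by rw [hgradadj]; exact hKA
  set ν : EuclideanSpace ℝ (Fin n) := ‖f x‖⁻¹ • f x with hν
  have hνn : ‖ν‖ = 1 := norm_smul_inv_norm (hfy0 x hx)
  have horth : Orthonormal ℝ (Set.restrict {i₀} (fun _ : Fin n => ν)) := by
    constructor
    · intro i; exact hνn
    · intro i j hij
      have h1 : (i : Fin n) = i₀ := i.2
      have h2 : (j : Fin n) = i₀ := j.2
      exact absurd (Subtype.ext (h1.trans h2.symm)) hij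
  obtain ⟨b, hb⟩ := horth.exists_orthonormalBasis_extension_of_card_eq
    (by simp [finrank_euclideanSpace_fin])
  have hbν : b i₀ = ν := hb i₀ rfl
  set T := ∑ i : Fin n, ‖A (EuclideanSpace.single i 1)‖ ^ 2 with hT
  have hadjnorm : ‖ContinuousLinearMap.adjoint A‖ = ‖A‖ :=
    ContinuousLinearMap.adjoint.norm_map A
  have hAadj : ∀ j : Fin n, ‖ContinuousLinearMap.adjoint A (b j)‖ ≤ ‖A‖ := by
    intro j
    calc ‖ContinuousLinearMap.adjoint A (b j)‖
        ≤ ‖ContinuousLinearMap.adjoint A‖ * ‖b j‖ := ContinuousLinearMap.le_opNorm _ _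
      _ = ‖A‖ := by rw [hadjnorm, b.orthonormal.1 j, mul_one]
  have hsplit : T = ‖ContinuousLinearMap.adjoint A ν‖ ^ 2
      + ∑ j ∈ Finset.univ.erase i₀, ‖ContinuousLinearMap.adjoint A (b j)‖ ^ 2 := by
    rw [hT, sum_sq_columns A b, ← Finset.add_sum_erase _ _ (Finset.mem_univ i₀), hbν]
  have hsum_erase : ∑ j ∈ Finset.univ.erase i₀, ‖ContinuousLinearMap.adjoint A (b j)‖ ^ 2
      ≤ ((n:ℝ) - 1) * (K * ‖gradient u x‖) ^ 2 := by
    have hbound : ∀ j ∈ Finset.univ.erase i₀,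
        ‖ContinuousLinearMap.adjoint A (b j)‖ ^ 2 ≤ (K * ‖gradient u x‖) ^ 2 := by
      intro j _
      exact pow_le_pow_left₀ (norm_nonneg _) (le_trans (hAadj j) hKA') 2
    calc ∑ j ∈ Finset.univ.erase i₀, ‖ContinuousLinearMap.adjoint A (b j)‖ ^ 2
        ≤ (Finset.univ.erase i₀).card • ((K * ‖gradient u x‖) ^ 2) :=
          Finset.sum_le_card_nsmul _ _ _ hbound
      _ = ((n:ℝ) - 1) * (K * ‖gradient u x‖) ^ 2 := by
          rw [Finset.card_erase_of_mem (Finset.mem_univ _), Finset.card_univ, Fintype.card_fin,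
            nsmul_eq_mul]
          congr 1
          have h1n : (1:ℕ) ≤ n := le_trans one_le_two hn
          rw [Nat.cast_sub h1n, Nat.cast_one]
  have hPadj : ∑ i : Fin n, (⟪f x, A (EuclideanSpace.single i 1)⟫ : ℝ) ^ 2
      = ‖f x‖ ^ 2 * ‖ContinuousLinearMap.adjoint A ν‖ ^ 2 := by
    have h1 : ‖ContinuousLinearMap.adjoint A ν‖ ^ 2
        = ∑ i : Fin n, (⟪ν, A (EuclideanSpace.single i 1)⟫ : ℝ) ^ 2 := by
      rw [← parseval_sq (EuclideanSpace.basisFun (Fin n) ℝ) (ContinuousLinearMap.adjoint A ν)]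
      exact Finset.sum_congr rfl fun i _ => by
        rw [EuclideanSpace.basisFun_apply, ContinuousLinearMap.adjoint_inner_left]
    rw [h1, Finset.mul_sum]
    refine Finset.sum_congr rfl fun i _ => ?_
    rw [hν, real_inner_smul_left]
    have hNne : ‖f x‖ ≠ 0 := ne_of_gt hN
    field_simp
    try ring
  have hlap1 : lapE (fun y => ‖f y‖) x = (T - ‖ContinuousLinearMap.adjoint A ν‖ ^ 2) / ‖f x‖ := by
    have hsum1 : lapE (fun y => ‖f y‖) x = ∑ i : Fin n,
        ((‖A (EuclideanSpace.single i 1)‖ ^ 2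
          + ⟪f x, iteratedFDeriv ℝ 2 f x ![EuclideanSpace.single i 1, EuclideanSpace.single i 1]⟫)
            / ‖f x‖
          - ⟪f x, A (EuclideanSpace.single i 1)⟫ ^ 2 / ‖f x‖ ^ 3) := by
      rw [lapE]
      exact Finset.sum_congr rfl fun i _ => hw1 _
    rw [hsum1, Finset.sum_sub_distrib, ← Finset.sum_div, ← Finset.sum_div,
      Finset.sum_add_distrib, ← inner_sum]
    rw [show (∑ i : Fin n, iteratedFDeriv ℝ 2 f x
        ![EuclideanSpace.single i 1, EuclideanSpace.single i 1])
      = (0 : EuclideanSpace ℝ (Fin n)) from hharm x hx]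
    rw [inner_zero_right, add_zero, hPadj]
    have hNne : ‖f x‖ ≠ 0 := ne_of_gt hN
    field_simp
    try ring
  have hnum : T - ‖ContinuousLinearMap.adjoint A ν‖ ^ 2 ≤ ((n:ℝ) - 1) * (K * ‖gradient u x‖) ^ 2 := by
    rw [hsplit]; linarith [hsum_erase]
  have hnum0 : (0:ℝ) ≤ ((n:ℝ) - 1) * (K * ‖gradient u x‖) ^ 2 := by
    have h1 : (1:ℝ) ≤ (n:ℝ) := by exact_mod_cast le_trans one_le_two hn
    exact mul_nonneg (by linarith) (sq_nonneg _)
  calc lapE (fun y => ‖f y‖) x = (T - ‖ContinuousLinearMap.adjoint A ν‖ ^ 2) / ‖f x‖ := hlap1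
    _ ≤ (((n:ℝ) - 1) * (K * ‖gradient u x‖) ^ 2) / ‖f x‖ := by gcongr
    _ ≤ (((n:ℝ) - 1) * (K * ‖gradient u x‖) ^ 2) / u x := by gcongr
    _ = K ^ 2 * ((n:ℝ) - 1) * (‖gradient u x‖ ^ 2 / u x) := by rw [mul_pow]; ring
    _ = K ^ 2 * ((n:ℝ) - 1) * lapE (fun y => u y * Real.log (u y)) x := by rw [hEq]
end

section
/- Let f : G → ℝⁿ be a harmonic mapping on an open set G ⊂ ℝⁿ with f(x) ≠ 0 for all x ∈ G, and let S(x) = f(x)/|f(x)|. Then at every point x ∈ G, Δ|f|(x) = |f(x)|·‖DS(x)‖², where ‖DS(x)‖ denotes the Hilbert–Schmidt (Frobenius) norm of the differential matrix DS(x). -/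
open Metric MeasureTheory

/-- The squared Hilbert–Schmidt (Frobenius) norm of the differential of a map
`S : ℝⁿ → ℝⁿ` at `x`, computed in the standard orthonormal basis. -/
noncomputable def hsNormSq {n : ℕ}
    (S : EuclideanSpace ℝ (Fin n) → EuclideanSpace ℝ (Fin n))
    (x : EuclideanSpace ℝ (Fin n)) : ℝ :=
  ∑ i : Fin n, ‖fderiv ℝ S x (EuclideanSpace.single i 1)‖ ^ 2

open scoped InnerProductSpace

section Aux

variable {E F : Type*} [NormedAddCommGroup E] [NormedSpace ℝ E]
  [NormedAddCommGroup F] [InnerProductSpace ℝ F]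

/-- Derivative of `‖f ·‖` at a point where `f` does not vanish. -/
lemma hasFDerivAt_norm_comp {f : E → F} {A : E →L[ℝ] F} {x : E}
    (hf : HasFDerivAt f A x) (h0 : f x ≠ 0) :
    HasFDerivAt (fun y => ‖f y‖) (‖f x‖⁻¹ • ((innerSL ℝ (f x)).comp A)) x := by
  have hfun : (fun y => ‖f y‖) = fun y => Real.sqrt ⟪f y, f y⟫_ℝ := by
    funext y
    rw [real_inner_self_eq_norm_sq, Real.sqrt_sq (norm_nonneg _)]
  have hq : HasFDerivAt (fun y => ⟪f y, f y⟫_ℝ)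
      ((fderivInnerCLM ℝ (f x, f x)).comp (A.prod A)) x := hf.inner ℝ hf
  have hpos : (0 : ℝ) < ⟪f x, f x⟫_ℝ := by
    rw [real_inner_self_eq_norm_sq]
    exact pow_pos (norm_pos_iff.2 h0) 2
  have h := hq.sqrt hpos.ne'
  rw [hfun]
  convert h using 1
  have h1 : Real.sqrt ⟪f x, f x⟫_ℝ = ‖f x‖ := by
    rw [real_inner_self_eq_norm_sq, Real.sqrt_sq (norm_nonneg _)]
  ext v
  simp only [ContinuousLinearMap.smul_apply, ContinuousLinearMap.comp_apply,
    ContinuousLinearMap.prod_apply, innerSL_apply_apply, fderivInnerCLM_apply, h1, smul_eq_mul]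
  rw [real_inner_comm (A v) (f x)]
  have hr : ‖f x‖ ≠ 0 := norm_ne_zero_iff.2 h0
  field_simp
  ring

end Aux

/-- If `f : G → ℝⁿ` is harmonic and nowhere zero on the open set `G ⊂ ℝⁿ`, and
`S = f/|f|`, then `Δ|f|(x) = |f(x)| ‖DS(x)‖²` on `G`, where `‖·‖` is the
Hilbert–Schmidt norm. -/
theorem laplacian_norm_eq (n : ℕ) (G : Set (EuclideanSpace ℝ (Fin n))) (hG : IsOpen G)
    (f S : EuclideanSpace ℝ (Fin n) → EuclideanSpace ℝ (Fin n))
    (hsmooth : ContDiffOn ℝ (⊤ : ℕ∞) f G)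
    (hharm : ∀ x ∈ G, lapE f x = 0)
    (hne : ∀ x ∈ G, f x ≠ 0)
    (hS : ∀ x ∈ G, S x = ‖f x‖⁻¹ • f x) :
    ∀ x ∈ G, lapE (fun y => ‖f y‖) x = ‖f x‖ * hsNormSq S x := by
  intro x hx
  classical
  have hmem : G ∈ nhds x := hG.mem_nhds hx
  have hfC : ∀ y ∈ G, ContDiffAt ℝ (⊤ : ℕ∞) f y := fun y hy =>
    hsmooth.contDiffAt (hG.mem_nhds hy)
  have hfd : ∀ y ∈ G, DifferentiableAt ℝ f y := fun y hy =>
    (hfC y hy).differentiableAt (by simp)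
  have hA : HasFDerivAt f (fderiv ℝ f x) x := (hfd x hx).hasFDerivAt
  have hB : HasFDerivAt (fderiv ℝ f) (fderiv ℝ (fderiv ℝ f) x) x :=
    (((hfC x hx).fderiv_right (m := 1) (WithTop.coe_le_coe.mpr le_top)).differentiableAt one_ne_zero).hasFDerivAt
  set A := fderiv ℝ f x with hAdef
  set B := fderiv ℝ (fderiv ℝ f) x with hBdef
  set g : EuclideanSpace ℝ (Fin n) → ℝ := fun y => ‖f y‖ with hgdef
  set r : ℝ := ‖f x‖ with hrdef
  have hr : r ≠ 0 := norm_ne_zero_iff.2 (hne x hx)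
  have hgC : ContDiffAt ℝ (⊤ : ℕ∞) g x := (hfC x hx).norm ℝ (hne x hx)
  have hgF : ∀ y ∈ G, HasFDerivAt g
      (‖f y‖⁻¹ • ((innerSL ℝ (f y)).comp (fderiv ℝ f y))) y := fun y hy =>
    hasFDerivAt_norm_comp (hfd y hy).hasFDerivAt (hne y hy)
  have h5 : HasFDerivAt g (r⁻¹ • ((innerSL ℝ (f x)).comp A)) x := hgF x hx
  have h6 : HasFDerivAt (fun y => ‖f y‖⁻¹)
      ((-(r ^ 2)⁻¹ : ℝ) • (r⁻¹ • ((innerSL ℝ (f x)).comp A))) x := by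
    have := (hasDerivAt_inv hr).comp_hasFDerivAt x h5
    simpa [Function.comp_def, hgdef] using this
  -- first derivative formula for g near x
  have hg1 : ∀ v : EuclideanSpace ℝ (Fin n), (fun y => fderiv ℝ g y v) =ᶠ[nhds x]
      (fun y => ‖f y‖⁻¹ * ⟪f y, fderiv ℝ f y v⟫_ℝ) := by
    intro v
    filter_upwards [hmem] with y hy
    rw [(hgF y hy).fderiv]
    simp
  -- second derivative of g in direction v
  have key : ∀ v : EuclideanSpace ℝ (Fin n),
      fderiv ℝ (fderiv ℝ g) x v v =
        r⁻¹ * ⟪f x, B v v⟫_ℝ +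
          (r⁻¹ * ⟪A v, A v⟫_ℝ
            - ⟪f x, A v⟫_ℝ * ((r ^ 2)⁻¹ * (r⁻¹ * ⟪f x, A v⟫_ℝ))) := by
    intro v
    have hgd : DifferentiableAt ℝ (fderiv ℝ g) x :=
      (hgC.fderiv_right (m := 1) (WithTop.coe_le_coe.mpr le_top)).differentiableAt one_ne_zero
    have hc2 := hgd.hasFDerivAt.clm_apply (hasFDerivAt_const v x)
    have h3 : HasFDerivAt (fun y => fderiv ℝ f y v)
        (A.comp (0 : EuclideanSpace ℝ (Fin n) →L[ℝ] EuclideanSpace ℝ (Fin n)) + B.flip v) x :=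
      hB.clm_apply (hasFDerivAt_const v x)
    have h4 := hA.inner ℝ h3
    have h7 := h6.mul h4
    have stepA : fderiv ℝ (fderiv ℝ g) x v v
        = fderiv ℝ (fun y => fderiv ℝ g y v) x v := by
      rw [hc2.fderiv]
      simp
    have stepB : fderiv ℝ (fun y => fderiv ℝ g y v) x
        = fderiv ℝ (fun y => ‖f y‖⁻¹ * ⟪f y, fderiv ℝ f y v⟫_ℝ) x := (hg1 v).fderiv_eq
    rw [stepA, stepB, show (fun y => ‖f y‖⁻¹ * ⟪f y, fderiv ℝ f y v⟫_ℝ) =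
      ((fun y => ‖f y‖⁻¹) * fun t => ⟪f t, fderiv ℝ f t v⟫_ℝ) from rfl, h7.fderiv]
    simp only [ContinuousLinearMap.add_apply, ContinuousLinearMap.smul_apply,
      ContinuousLinearMap.comp_apply, ContinuousLinearMap.prod_apply,
      ContinuousLinearMap.flip_apply, ContinuousLinearMap.zero_apply, map_zero,
      fderivInnerCLM_apply, innerSL_apply_apply, smul_eq_mul, zero_add]
    ring
  -- the differential of S at x
  have hDS : HasFDerivAt S
      (r⁻¹ • A + ((-(r ^ 2)⁻¹ : ℝ) • (r⁻¹ • ((innerSL ℝ (f x)).comp A))).smulRight (f x)) x := by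
    have hev : (fun y => ‖f y‖⁻¹ • f y) =ᶠ[nhds x] S := by
      filter_upwards [hmem] with y hy
      exact (hS y hy).symm
    exact (h6.smul hA).congr_of_eventuallyEq hev.symm
  -- norms of the columns of DS
  have hScol : ∀ v : EuclideanSpace ℝ (Fin n),
      ‖fderiv ℝ S x v‖ ^ 2 =
        (r ^ 2)⁻¹ * ⟪A v, A v⟫_ℝ
          - ⟪f x, A v⟫_ℝ * ⟪f x, A v⟫_ℝ * ((r ^ 2)⁻¹ * (r ^ 2)⁻¹) := by
    intro v
    rw [hDS.fderiv]
    simp only [ContinuousLinearMap.add_apply, ContinuousLinearMap.smul_apply,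
      ContinuousLinearMap.smulRight_apply, ContinuousLinearMap.comp_apply,
      innerSL_apply_apply, smul_eq_mul]
    rw [norm_add_sq_real]
    rw [real_inner_smul_left, real_inner_smul_right, real_inner_comm (A v) (f x)]
    have e1 : ‖r⁻¹ • A v‖ ^ 2 = (r⁻¹) ^ 2 * ‖A v‖ ^ 2 := by
      rw [norm_smul]; simp [mul_pow, sq_abs]
    have e2 : ‖(-(r ^ 2)⁻¹ * (r⁻¹ * ⟪A v, f x⟫_ℝ)) • f x‖ ^ 2
        = (-(r ^ 2)⁻¹ * (r⁻¹ * ⟪A v, f x⟫_ℝ)) ^ 2 * r ^ 2 := by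
      rw [norm_smul]; simp [mul_pow, sq_abs, ← hrdef]
    rw [e1, e2, ← real_inner_self_eq_norm_sq (A v)]
    field_simp
    ring
  -- harmonicity: the trace of B vanishes
  have hsum0 : (∑ i : Fin n,
      B (EuclideanSpace.single i 1) (EuclideanSpace.single i 1)) = 0 := by
    have hh := hharm x hx
    unfold lapE at hh
    rw [← hh]
    refine Finset.sum_congr rfl fun i _ => ?_
    rw [iteratedFDeriv_two_apply]
    simp
    rfl
  -- compute the Laplacian of g
  have hlap : lapE g x = ∑ i : Fin n,
      (r⁻¹ * ⟪f x, B (EuclideanSpace.single i 1) (EuclideanSpace.single i 1)⟫_ℝ +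
        (r⁻¹ * ⟪A (EuclideanSpace.single i 1), A (EuclideanSpace.single i 1)⟫_ℝ
          - ⟪f x, A (EuclideanSpace.single i 1)⟫_ℝ *
            ((r ^ 2)⁻¹ * (r⁻¹ * ⟪f x, A (EuclideanSpace.single i 1)⟫_ℝ)))) := by
    unfold lapE
    refine Finset.sum_congr rfl fun i _ => ?_
    rw [iteratedFDeriv_two_apply]
    simpa using key (EuclideanSpace.single i 1)
  rw [hlap, Finset.sum_add_distrib, ← Finset.mul_sum, ← inner_sum, hsum0, inner_zero_right,
    mul_zero, zero_add]
  unfold hsNormSq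
  rw [Finset.mul_sum]
  refine Finset.sum_congr rfl fun i _ => ?_
  rw [hScol (EuclideanSpace.single i 1)]
  field_simp
end

section
/- Let n ≥ 2. For 0 < a < 1 define f_a : 𝔹 → ℝⁿ on the unit ball 𝔹 ⊂ ℝⁿ by f_a(x) = a x + e₁ with e₁ = (1,0,…,0), and set u_a(x) = (f_a)₁(x) = 1 + a x₁ > 0. Define X(a) = ‖f_a‖₁ − |f_a(0)| and Y(a) = ∫_𝕊 ( u_a(ζ) log u_a(ζ) − u_a(0) log u_a(0) ) dσ(ζ). Then as a → 0, X(a) = a²(n−1)/(2n) + o(a²) and Y(a) = a²/(2n) + o(a²); in particular lim_{a→0} X(a)/Y(a) = n − 1. -/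
/-!
The measure `σ` is invariant under the orthogonal group: the reflection `ζ ↦ -ζ` gives
`∫ ζ₁ dσ = 0` and the coordinate permutations, together with `∑ ζᵢ² = 1`, give
`∫ ζ₁² dσ = 1/n`. Since `r ↦ ∫ ‖a r ζ + e₁‖ dσ` is continuous and, by convexity and
`∫ ‖a ζ + e₁‖ dσ ≥ 1`, bounded by its value at `r = 1`, the supremum defining `‖f_a‖₁` is
`∫_𝕊 ‖a ζ + e₁‖ dσ`. Expanding `‖a ζ + e₁‖ = √(1 + 2 a ζ₁ + a²)` and
`(1 + a ζ₁) log (1 + a ζ₁)` to second order in `a`, with remainders `O(a³)` uniformly in `ζ`,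
and integrating the quadratic parts with these two moments gives
`X(a) = a² (n - 1) / (2n) + O(a³)` and `Y(a) = a² / (2n) + O(a³)`.
-/

open Metric MeasureTheory Filter Topology Asymptotics

/-- The normalized surface measure `σ` on the unit sphere `𝕊 ⊂ ℝⁿ`. -/
noncomputable def sphereσ (n : ℕ) : Measure (sphere (0 : EuclideanSpace ℝ (Fin n)) 1) :=
  (((volume : Measure (EuclideanSpace ℝ (Fin n))).toSphere) Set.univ)⁻¹ •
    (volume : Measure (EuclideanSpace ℝ (Fin n))).toSphere

/-- `X(a) = ‖f_a‖₁ − |f_a(0)|` for `f_a(x) = a x + e₁` on the unit ball of `ℝⁿ`. -/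
noncomputable def Xfun (n : ℕ) (hn : 0 < n) (a : ℝ) : ℝ :=
  (⨆ r : Set.Ioo (0:ℝ) 1,
      ∫ ζ : sphere (0 : EuclideanSpace ℝ (Fin n)) 1,
        ‖a • (r.1 • (ζ : EuclideanSpace ℝ (Fin n))) +
          EuclideanSpace.single (⟨0, hn⟩ : Fin n) (1:ℝ)‖ ∂(sphereσ n)) -
    ‖a • (0 : EuclideanSpace ℝ (Fin n)) +
      EuclideanSpace.single (⟨0, hn⟩ : Fin n) (1:ℝ)‖

/-- `Y(a) = ∫_𝕊 (u_a(ζ) log u_a(ζ) − u_a(0) log u_a(0)) dσ(ζ)` for `u_a(x) = 1 + a x₁`. -/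
noncomputable def Yfun (n : ℕ) (hn : 0 < n) (a : ℝ) : ℝ :=
  ∫ ζ : sphere (0 : EuclideanSpace ℝ (Fin n)) 1,
    ((1 + a * (ζ : EuclideanSpace ℝ (Fin n)) ⟨0, hn⟩) *
        Real.log (1 + a * (ζ : EuclideanSpace ℝ (Fin n)) ⟨0, hn⟩) -
      1 * Real.log 1) ∂(sphereσ n)

open Set
open scoped Pointwise

lemma abs_sqrt_sub_quadratic_le {s b : ℝ} (hs : |s| ≤ b) (hb : b ≤ 1 / 2) :
    |√(1 + 2 * s + b ^ 2) - (1 + s + (b ^ 2 - s ^ 2) / 2)| ≤ 2 * b ^ 3 := by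
  obtain ⟨hs₁, hs₂⟩ := abs_le.1 hs
  have hb₀ : 0 ≤ b := (abs_nonneg s).trans hs
  set u := b ^ 2 - s ^ 2 with hu_def
  have hu₀ : 0 ≤ u := sub_nonneg.2 (sq_le_sq' hs₁ hs₂)
  have hu : u ≤ b ^ 2 := sub_le_self _ (sq_nonneg s)
  set q := √(1 + 2 * s + b ^ 2)
  set p := 1 + s + u / 2 with hp
  have hq_sq : q ^ 2 = 1 + 2 * s + b ^ 2 := Real.sq_sqrt (by nlinarith)
  have hq : 1 + s ≤ q := Real.le_sqrt_of_sq_le (by nlinarith)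
  have hsq : |p ^ 2 - q ^ 2| ≤ 2 * b ^ 3 := by
    have hsu : |s * u| ≤ b ^ 3 := by
      rw [abs_mul, abs_of_nonneg hu₀, pow_succ']
      exact mul_le_mul hs hu hu₀ hb₀
    have hu_sq : u ^ 2 / 4 ≤ b ^ 3 := by nlinarith [pow_le_pow_left₀ hu₀ hu 2]
    calc |p ^ 2 - q ^ 2| = |s * u + u ^ 2 / 4| := by rw [hq_sq, hp, hu_def]; ring_nf
      _ ≤ |s * u| + |u ^ 2 / 4| := abs_add_le _ _
      _ ≤ 2 * b ^ 3 := by rw [abs_of_nonneg (by positivity : (0 : ℝ) ≤ u ^ 2 / 4)]; linarith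
  -- `p + q ≥ 1` turns the bound on `p² - q² = (p - q) (p + q)` into one on `p - q`.
  have hpq : 1 ≤ p + q := by linarith
  rw [abs_sub_comm]
  calc |p - q| ≤ |p - q| * (p + q) := le_mul_of_one_le_right (abs_nonneg _) hpq
    _ = |p ^ 2 - q ^ 2| := by rw [← abs_of_pos (by linarith : 0 < p + q), ← abs_mul]; ring_nf
    _ ≤ 2 * b ^ 3 := hsq

lemma abs_mul_log_sub_quadratic_le {s : ℝ} (hs : |s| ≤ 1 / 2) :
    |(1 + s) * Real.log (1 + s) - s - s ^ 2 / 2| ≤ 4 * |s| ^ 3 := by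
  have hs₃ : 0 ≤ |s| ^ 3 := by positivity
  set R := Real.log (1 + s) - s + s ^ 2 / 2 with hR_def
  have hR : |R| ≤ 2 * |s| ^ 3 := by
    have key : |-s + s ^ 2 / 2 + Real.log (1 + s)| ≤ |s| ^ 3 / (1 - |s|) := by
      simpa [Finset.sum_range_succ, one_add_one_eq_two] using
        Real.abs_log_sub_add_sum_range_le (x := -s) (by rw [abs_neg]; linarith) 2
    calc |R| = |-s + s ^ 2 / 2 + Real.log (1 + s)| := by rw [hR_def]; ring_nf
      _ ≤ |s| ^ 3 / (1 - |s|) := key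
      _ ≤ 2 * |s| ^ 3 := by rw [div_le_iff₀ (by linarith)]; nlinarith
  have h1s : |1 + s| ≤ 3 / 2 := by rw [abs_le] at hs ⊢; constructor <;> linarith
  calc |(1 + s) * Real.log (1 + s) - s - s ^ 2 / 2| = |-(s ^ 3 / 2) + (1 + s) * R| := by
        rw [hR_def]; ring_nf
    _ ≤ |s| ^ 3 / 2 + 3 / 2 * (2 * |s| ^ 3) := by
        refine (abs_add_le _ _).trans (add_le_add (by simp [abs_div, abs_pow]) ?_)
        rw [abs_mul]
        exact mul_le_mul h1s hR (abs_nonneg _) (by norm_num)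
    _ ≤ 4 * |s| ^ 3 := by linarith

lemma ciSup_Ioo_comp_mul_eq {g : ℝ → ℝ} (hg : Continuous g) (a : ℝ)
    (hle : ∀ r ∈ Ioo (0 : ℝ) 1, g (a * r) ≤ g a) :
    ⨆ r : Ioo (0 : ℝ) 1, g (a * r) = g a := by
  have := (nonempty_Ioo.2 (zero_lt_one (α := ℝ))).to_subtype
  refine ciSup_eq_of_forall_le_of_forall_lt_exists_gt (fun r => hle r r.2) fun w hw => ?_
  have hlim : Tendsto (fun r => g (a * r)) (𝓝[<] 1) (𝓝 (g a)) := by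
    simpa [Function.comp_def] using
      ((hg.comp (continuous_const_mul a)).tendsto 1).mono_left nhdsWithin_le_nhds
  obtain ⟨r, hwr, hr⟩ :=
    ((hlim.eventually (lt_mem_nhds hw)).and (Ioo_mem_nhdsLT zero_lt_one)).exists
  exact ⟨⟨r, hr⟩, hwr⟩

section SphereSymmetry

variable {E : Type*} [NormedAddCommGroup E] [NormedSpace ℝ E]

noncomputable def sphereHomeomorph (e : E ≃ₗᵢ[ℝ] E) : sphere (0 : E) 1 ≃ₜ sphere (0 : E) 1 :=
  e.toHomeomorph.subtype fun x => by simp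

@[simp]
lemma coe_sphereHomeomorph (e : E ≃ₗᵢ[ℝ] E) (ζ : sphere (0 : E) 1) :
    (sphereHomeomorph e ζ : E) = e ζ := rfl

lemma image_coe_preimage_sphereHomeomorph (e : E ≃ₗᵢ[ℝ] E) (s : Set (sphere (0 : E) 1)) :
    ((↑) '' (sphereHomeomorph e ⁻¹' s) : Set E) = e ⁻¹' ((↑) '' s) := by
  ext x
  constructor
  · rintro ⟨ζ, hζ, rfl⟩
    exact ⟨_, hζ, rfl⟩
  · rintro ⟨ζ, hζ, hx⟩
    have hx' : x ∈ sphere (0 : E) 1 := by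
      simpa [mem_sphere_zero_iff_norm, hx] using ζ.2
    refine ⟨⟨x, hx'⟩, ?_, rfl⟩
    rwa [mem_preimage, show sphereHomeomorph e ⟨x, hx'⟩ = ζ from Subtype.ext hx.symm]

lemma LinearEquiv.set_smul_preimage (e : E ≃ₗ[ℝ] E) (S : Set ℝ) (A : Set E) :
    S • (e ⁻¹' A) = e ⁻¹' (S • A) := by
  rw [← e.image_symm_eq_preimage, ← e.image_symm_eq_preimage, ← image2_smul, ← image2_smul,
    image_image2_distrib_right (map_smul e.symm)]

variable [MeasurableSpace E] [BorelSpace E]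

lemma measurePreserving_sphereHomeomorph {μ : Measure E} (e : E ≃ₗᵢ[ℝ] E)
    (he : MeasurePreserving e μ μ) :
    MeasurePreserving (sphereHomeomorph e) μ.toSphere μ.toSphere := by
  refine ⟨(sphereHomeomorph e).continuous.measurable, Measure.ext fun s hs => ?_⟩
  rw [Measure.map_apply (sphereHomeomorph e).continuous.measurable hs,
    Measure.toSphere_apply' _ (hs.preimage (sphereHomeomorph e).continuous.measurable),
    Measure.toSphere_apply' _ hs, image_coe_preimage_sphereHomeomorph,
    ← e.coe_toLinearEquiv, e.toLinearEquiv.set_smul_preimage, e.coe_toLinearEquiv]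
  exact congrArg _ (he.measure_preimage_equiv (f := e.toHomeomorph.toMeasurableEquiv) _)

end SphereSymmetry

section SphereMoments

variable {n : ℕ}

local notation "ℝⁿ" => EuclideanSpace ℝ (Fin n)
local notation "𝕊" => sphere (0 : ℝⁿ) 1

instance isProbabilityMeasure_sphereσ [NeZero n] : IsProbabilityMeasure (sphereσ n) := by
  have : NeZero (volume : Measure ℝⁿ).toSphere := ⟨Measure.toSphere_ne_zero _⟩
  unfold sphereσ
  infer_instance

lemma integral_sphereσ_comp_sphereHomeomorph (e : ℝⁿ ≃ₗᵢ[ℝ] ℝⁿ) (f : 𝕊 → ℝ) :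
    ∫ ζ, f (sphereHomeomorph e ζ) ∂sphereσ n = ∫ ζ, f ζ ∂sphereσ n :=
  ((measurePreserving_sphereHomeomorph e e.measurePreserving).smul_measure _).integral_comp'
    (f := (sphereHomeomorph e).toMeasurableEquiv) f

lemma integral_sphereσ_coord (i : Fin n) : ∫ ζ : 𝕊, (ζ : ℝⁿ) i ∂sphereσ n = 0 := by
  have h := integral_sphereσ_comp_sphereHomeomorph (.neg ℝ) fun ζ : 𝕊 => (ζ : ℝⁿ) i
  simp only [coe_sphereHomeomorph, LinearIsometryEquiv.coe_neg, PiLp.neg_apply,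
    integral_neg] at h
  linarith

lemma abs_sphere_coord_le_one (ζ : 𝕊) (i : Fin n) : |(ζ : ℝⁿ) i| ≤ 1 := by
  simpa using PiLp.norm_apply_le (ζ : ℝⁿ) i

lemma norm_smul_add_single_sq (t : ℝ) (ζ : 𝕊) (i : Fin n) :
    ‖t • (ζ : ℝⁿ) + EuclideanSpace.single i 1‖ ^ 2 = 1 + 2 * (t * (ζ : ℝⁿ) i) + t ^ 2 := by
  rw [norm_add_sq_real, norm_smul, real_inner_smul_left, EuclideanSpace.inner_single_right,
    PiLp.norm_single, mem_sphere_zero_iff_norm.1 ζ.2]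
  simp only [Real.norm_eq_abs, mul_one, sq_abs, one_mul, norm_one, one_pow, conj_trivial]
  ring

noncomputable def sphereAvgNorm (i : Fin n) (t : ℝ) : ℝ :=
  ∫ ζ : 𝕊, ‖t • (ζ : ℝⁿ) + EuclideanSpace.single i 1‖ ∂sphereσ n

section NeZero

variable [NeZero n]

lemma Continuous.integrable_sphereσ {f : 𝕊 → ℝ} (hf : Continuous f) :
    Integrable f (sphereσ n) :=
  hf.integrable_of_hasCompactSupport (.of_compactSpace f)

lemma integral_sphereσ_coord_sq (i : Fin n) :
    ∫ ζ : 𝕊, (ζ : ℝⁿ) i ^ 2 ∂sphereσ n = (n : ℝ)⁻¹ := by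
  have hsymm (j : Fin n) :
      ∫ ζ : 𝕊, (ζ : ℝⁿ) j ^ 2 ∂sphereσ n = ∫ ζ : 𝕊, (ζ : ℝⁿ) i ^ 2 ∂sphereσ n := by
    simpa using integral_sphereσ_comp_sphereHomeomorph
      (LinearIsometryEquiv.piLpCongrLeft 2 ℝ ℝ (Equiv.swap i j)) fun ζ : 𝕊 => (ζ : ℝⁿ) i ^ 2
  have hsum : ∑ j, ∫ ζ : 𝕊, (ζ : ℝⁿ) j ^ 2 ∂sphereσ n = 1 := by
    rw [← integral_finsetSum (f := fun j (ζ : 𝕊) => (ζ : ℝⁿ) j ^ 2) _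
      fun j _ => Continuous.integrable_sphereσ (by fun_prop)]
    simp [← EuclideanSpace.real_norm_sq_eq]
  simp only [hsymm, Finset.sum_const, Finset.card_univ, Fintype.card_fin, nsmul_eq_mul] at hsum
  exact eq_inv_of_mul_eq_one_right hsum

lemma abs_integral_sphereσ_sub_quadratic_le {F : 𝕊 → ℝ} (hF : Continuous F) (i : Fin n)
    {c₀ c₁ c₂ B : ℝ} (hB : ∀ ζ : 𝕊, |F ζ - (c₀ + c₁ * (ζ : ℝⁿ) i + c₂ * (ζ : ℝⁿ) i ^ 2)| ≤ B) :
    |∫ ζ, F ζ ∂sphereσ n - (c₀ + c₂ / n)| ≤ B := by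
  have hQ : ∫ ζ : 𝕊, (c₀ + c₁ * (ζ : ℝⁿ) i + c₂ * (ζ : ℝⁿ) i ^ 2) ∂sphereσ n = c₀ + c₂ / n := by
    rw [integral_add (Continuous.integrable_sphereσ (by fun_prop))
        (Continuous.integrable_sphereσ (by fun_prop)),
      integral_add (integrable_const _) (Continuous.integrable_sphereσ (by fun_prop)),
      integral_const, integral_const_mul, integral_const_mul, integral_sphereσ_coord,
      integral_sphereσ_coord_sq]
    simp [div_eq_mul_inv]
  rw [← hQ, ← integral_sub hF.integrable_sphereσ (Continuous.integrable_sphereσ (by fun_prop))]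
  simpa using norm_integral_le_of_norm_le_const (μ := sphereσ n)
    (ae_of_all _ fun ζ => (Real.norm_eq_abs _).trans_le (hB ζ))

lemma continuous_sphereAvgNorm (i : Fin n) : Continuous (sphereAvgNorm i) := by
  have h := continuous_parametric_integral_of_continuous (μ := sphereσ n) (s := univ)
    (f := fun (t : ℝ) (ζ : 𝕊) => ‖t • (ζ : ℝⁿ) + EuclideanSpace.single i 1‖) (by fun_prop)
    isCompact_univ
  unfold sphereAvgNorm
  simpa only [Measure.restrict_univ] using h

lemma one_le_sphereAvgNorm (i : Fin n) (t : ℝ) : 1 ≤ sphereAvgNorm i t := by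
  have hpt (ζ : 𝕊) : 1 + t * (ζ : ℝⁿ) i ≤ ‖t • (ζ : ℝⁿ) + EuclideanSpace.single i 1‖ := by
    have h := (le_abs_self _).trans
      (PiLp.norm_apply_le (t • (ζ : ℝⁿ) + EuclideanSpace.single i 1) i)
    simpa [add_comm] using h
  calc (1 : ℝ) = ∫ ζ : 𝕊, (1 + t * (ζ : ℝⁿ) i) ∂sphereσ n := by
        rw [integral_add (integrable_const 1) (Continuous.integrable_sphereσ (by fun_prop)),
          integral_const_mul, integral_sphereσ_coord]
        simp
    _ ≤ sphereAvgNorm i t :=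
        integral_mono (Continuous.integrable_sphereσ (by fun_prop))
          (Continuous.integrable_sphereσ (by fun_prop)) hpt

lemma sphereAvgNorm_mul_le (i : Fin n) (t : ℝ) {r : ℝ} (hr₀ : 0 ≤ r) (hr₁ : r ≤ 1) :
    sphereAvgNorm i (t * r) ≤ sphereAvgNorm i t := by
  have hpt (ζ : 𝕊) : ‖(t * r) • (ζ : ℝⁿ) + EuclideanSpace.single i 1‖
      ≤ (1 - r) + r * ‖t • (ζ : ℝⁿ) + EuclideanSpace.single i 1‖ := by
    calc ‖(t * r) • (ζ : ℝⁿ) + EuclideanSpace.single i 1‖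
        = ‖(1 - r) • EuclideanSpace.single i (1 : ℝ)
            + r • (t • (ζ : ℝⁿ) + EuclideanSpace.single i 1)‖ := by
          congr 1; module
      _ ≤ (1 - r) + r * ‖t • (ζ : ℝⁿ) + EuclideanSpace.single i 1‖ := by
          refine (norm_add_le _ _).trans_eq ?_
          rw [norm_smul, norm_smul, PiLp.norm_single, Real.norm_of_nonneg hr₀,
            Real.norm_of_nonneg (sub_nonneg.2 hr₁), norm_one, mul_one]
  calc sphereAvgNorm i (t * r)
      ≤ ∫ ζ : 𝕊, ((1 - r) + r * ‖t • (ζ : ℝⁿ) + EuclideanSpace.single i 1‖) ∂sphereσ n :=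
        integral_mono (Continuous.integrable_sphereσ (by fun_prop))
          (Continuous.integrable_sphereσ (by fun_prop)) hpt
    _ = (1 - r) + r * sphereAvgNorm i t := by
        rw [integral_add (integrable_const _) (Continuous.integrable_sphereσ (by fun_prop)),
          integral_const_mul]
        simp [sphereAvgNorm]
    _ ≤ sphereAvgNorm i t := by nlinarith [one_le_sphereAvgNorm i t]

end NeZero

lemma Xfun_eq_sphereAvgNorm_sub_one (hn : 0 < n) (a : ℝ) : Xfun n hn a = sphereAvgNorm ⟨0, hn⟩ a - 1 := by
  have : NeZero n := ⟨hn.ne'⟩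
  rw [← ciSup_Ioo_comp_mul_eq (continuous_sphereAvgNorm ⟨0, hn⟩) a
    fun r hr => sphereAvgNorm_mul_le _ a hr.1.le hr.2.le]
  simp only [Xfun, sphereAvgNorm, smul_smul, smul_zero, zero_add, PiLp.norm_single, norm_one]

lemma abs_Xfun_sub_le (hn : 0 < n) {a : ℝ} (ha : |a| ≤ 1 / 2) :
    |Xfun n hn a - a ^ 2 * (n - 1) / (2 * n)| ≤ 2 * |a| ^ 3 := by
  have : NeZero n := ⟨hn.ne'⟩
  have hpt (ζ : 𝕊) : |‖a • (ζ : ℝⁿ) + EuclideanSpace.single ⟨0, hn⟩ 1‖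
      - ((1 + a ^ 2 / 2) + a * (ζ : ℝⁿ) ⟨0, hn⟩ + -(a ^ 2 / 2) * (ζ : ℝⁿ) ⟨0, hn⟩ ^ 2)|
      ≤ 2 * |a| ^ 3 := by
    have hs : |a * (ζ : ℝⁿ) ⟨0, hn⟩| ≤ |a| := by
      simpa [abs_mul] using mul_le_mul_of_nonneg_left (abs_sphere_coord_le_one ζ _) (abs_nonneg a)
    rw [← Real.sqrt_sq (norm_nonneg _), norm_smul_add_single_sq, ← sq_abs a]
    convert abs_sqrt_sub_quadratic_le hs ha using 3
    rw [sq_abs]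
    ring
  have h := abs_integral_sphereσ_sub_quadratic_le (by fun_prop) _ hpt
  rw [Xfun_eq_sphereAvgNorm_sub_one]
  convert h using 2
  simp only [sphereAvgNorm]
  field_simp
  ring

lemma abs_Yfun_sub_le (hn : 0 < n) {a : ℝ} (ha : |a| ≤ 1 / 2) :
    |Yfun n hn a - a ^ 2 / (2 * n)| ≤ 4 * |a| ^ 3 := by
  have : NeZero n := ⟨hn.ne'⟩
  have hpt (ζ : 𝕊) : |(1 + a * (ζ : ℝⁿ) ⟨0, hn⟩) * Real.log (1 + a * (ζ : ℝⁿ) ⟨0, hn⟩)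
      - (0 + a * (ζ : ℝⁿ) ⟨0, hn⟩ + a ^ 2 / 2 * (ζ : ℝⁿ) ⟨0, hn⟩ ^ 2)| ≤ 4 * |a| ^ 3 := by
    have hs : |a * (ζ : ℝⁿ) ⟨0, hn⟩| ≤ |a| := by
      simpa [abs_mul] using mul_le_mul_of_nonneg_left (abs_sphere_coord_le_one ζ _) (abs_nonneg a)
    calc _ = |(1 + a * (ζ : ℝⁿ) ⟨0, hn⟩) * Real.log (1 + a * (ζ : ℝⁿ) ⟨0, hn⟩)
          - a * (ζ : ℝⁿ) ⟨0, hn⟩ - (a * (ζ : ℝⁿ) ⟨0, hn⟩) ^ 2 / 2| := by ring_nf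
      _ ≤ 4 * |a * (ζ : ℝⁿ) ⟨0, hn⟩| ^ 3 := abs_mul_log_sub_quadratic_le (hs.trans ha)
      _ ≤ 4 * |a| ^ 3 := by gcongr
  have h := abs_integral_sphereσ_sub_quadratic_le
    (Real.continuous_mul_log.comp (by fun_prop : Continuous fun ζ : 𝕊 => 1 + a * (ζ : ℝⁿ) ⟨0, hn⟩))
    _ hpt
  rw [show a ^ 2 / (2 * n) = 0 + a ^ 2 / 2 / n by ring]
  simpa [Yfun] using h

end SphereMoments

lemma isLittleO_sq_of_abs_le_cube {F : ℝ → ℝ} {C δ : ℝ} (hδ : 0 < δ)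
    (hF : ∀ a, |a| ≤ δ → |F a| ≤ C * |a| ^ 3) : F =o[𝓝 0] (· ^ 2) := by
  refine (IsBigO.of_bound C ?_).trans_isLittleO (isLittleO_pow_pow (by norm_num : 2 < 3))
  filter_upwards [closedBall_mem_nhds (0 : ℝ) hδ] with a ha
  simpa [abs_pow] using hF a (by simpa using ha)

lemma tendsto_div_of_isLittleO_sub_mul {α : Type*} {l : Filter α} {f g h : α → ℝ} {c d : ℝ}
    (hd : d ≠ 0) (hh : ∀ᶠ x in l, h x ≠ 0) (hf : (fun x => f x - c * h x) =o[l] h)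
    (hg : (fun x => g x - d * h x) =o[l] h) :
    Tendsto (fun x => f x / g x) l (𝓝 (c / d)) := by
  have hdiv {u : α → ℝ} {k : ℝ} (hu : (fun x => u x - k * h x) =o[l] h) :
      Tendsto (fun x => u x / h x) l (𝓝 k) := by
    refine (zero_add k ▸ hu.tendsto_div_nhds_zero.add_const k).congr' ?_
    filter_upwards [hh] with x hx
    field_simp
    ring
  refine ((hdiv hf).div (hdiv hg) hd).congr' ?_
  filter_upwards [hh] with x hx
  exact div_div_div_cancel_right₀ hx _ _

/-- **Sharpness of the constant `n − 1`:** for `f_a(x) = a x + e₁`, as `a → 0⁺`,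
`X(a) = a²(n−1)/(2n) + o(a²)`, `Y(a) = a²/(2n) + o(a²)`, and `X(a)/Y(a) → n − 1`. -/
theorem sharpness_general_dimension (n : ℕ) (hn : 2 ≤ n) :
    (fun a : ℝ => Xfun n (Nat.lt_of_lt_of_le Nat.zero_lt_two hn) a -
        a ^ 2 * (n - 1) / (2 * n)) =o[𝓝[>] (0:ℝ)] (fun a => a ^ 2) ∧
    (fun a : ℝ => Yfun n (Nat.lt_of_lt_of_le Nat.zero_lt_two hn) a -
        a ^ 2 / (2 * n)) =o[𝓝[>] (0:ℝ)] (fun a => a ^ 2) ∧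
    Tendsto (fun a : ℝ => Xfun n (Nat.lt_of_lt_of_le Nat.zero_lt_two hn) a /
        Yfun n (Nat.lt_of_lt_of_le Nat.zero_lt_two hn) a)
      (𝓝[>] (0:ℝ)) (𝓝 ((n : ℝ) - 1)) := by
  have hn₀ : 0 < n := by omega
  have hX := (isLittleO_sq_of_abs_le_cube one_half_pos fun a ha =>
    abs_Xfun_sub_le hn₀ ha).mono (nhdsWithin_le_nhds (s := Ioi 0))
  have hY := (isLittleO_sq_of_abs_le_cube one_half_pos fun a ha =>
    abs_Yfun_sub_le hn₀ ha).mono (nhdsWithin_le_nhds (s := Ioi 0))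
  refine ⟨hX, hY, ?_⟩
  rw [show (n : ℝ) - 1 = (n - 1) / (2 * n) / (1 / (2 * n)) by field_simp]
  exact tendsto_div_of_isLittleO_sub_mul (by positivity)
    (eventually_mem_nhdsWithin.mono fun a (ha : 0 < a) => pow_ne_zero 2 ha.ne')
    (hX.congr_left fun a => by ring) (hY.congr_left fun a => by ring)
end
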